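/- arXiv:2402.16820 — 4 statements merged into one kernel-verified Lean document; each statement's English description precedes it below -/
import Mathlib

section
/- Let M > 0, f ∈ C⁴([−M,M]), a ∈ C³([−M,M]), and suppose the uniform strict hyperbolicity condition inf_{|u|≤M} f'(u) > sup_{|u|≤M} a(u) holds. Then the function r(u₋,u₊) := ((s(u₋,u₊) − a(u₊))/(s(u₋,u₊) − a(u₋))) · exp(A(u₋) − A(u₊)) is well defined and of class C³ on [−M,M]², and r(u₋,u₊) > 0 for all (u₋,u₊) ∈ [−M,M]². Consequently, for Z₋ := Z₊ · r(u₋,u₊): if Z₊ = 0 then Z₋ = 0, and if Z₊ ≠ 0 then Z₋ Z₊ > 0. -/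
open Real Set

set_option synthInstance.maxHeartbeats 1000000 in
set_option maxHeartbeats 1000000 in
/-- Smoothness of parametrized interval integrals with jointly `C^n` integrand. -/
lemma contDiff_param (n : ℕ) :
    ∀ {E : Type} [NormedAddCommGroup E] [NormedSpace ℝ E] [CompleteSpace E]
      (F : ℝ × ℝ → ℝ → E), ContDiff ℝ n (Function.uncurry F) →
      ContDiff ℝ n (fun x : ℝ × ℝ => ∫ t in (0:ℝ)..1, F x t) := by
  induction n with
  | zero =>
    intro E _ _ _ F hF
    rw [show ((0:ℕ) : WithTop ℕ∞) = 0 by norm_cast] at *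
    rw [contDiff_zero] at *
    exact intervalIntegral.continuous_parametric_intervalIntegral_of_continuous' hF 0 1
  | succ n ih =>
    intro E _ _ _ F hF
    have h1n : (1 : WithTop ℕ∞) ≤ ((n+1 : ℕ) : WithTop ℕ∞) := by
      exact_mod_cast Nat.one_le_iff_ne_zero.mpr (Nat.succ_ne_zero n)
    set F' : ℝ × ℝ → ℝ → (ℝ × ℝ) →L[ℝ] E := fun x t => fderiv ℝ (fun y => F y t) x with hF'def
    have hF'c : ContDiff ℝ n (Function.uncurry F') := by
      have heq : Function.uncurry F'
          = fun q : (ℝ × ℝ) × ℝ => fderiv ℝ (fun y => F y q.2) q.1 := rfl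
      rw [heq]
      apply ContDiff.fderiv (f := fun (q : (ℝ × ℝ) × ℝ) (y : ℝ × ℝ) => F y q.2)
        (g := Prod.fst) (m := ((n+1 : ℕ) : WithTop ℕ∞))
      · have heq2 : (Function.uncurry fun (q : (ℝ × ℝ) × ℝ) (y : ℝ × ℝ) => F y q.2)
            = Function.uncurry F ∘ (fun z : ((ℝ × ℝ) × ℝ) × (ℝ × ℝ) => (z.2, z.1.2)) := rfl
        rw [heq2]
        exact hF.comp (contDiff_snd.prodMk (contDiff_snd.comp contDiff_fst))
      · exact contDiff_fst
      · norm_cast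
    have key : ∀ x₀ : ℝ × ℝ, HasFDerivAt (fun x => ∫ t in (0:ℝ)..1, F x t)
        (∫ t in (0:ℝ)..1, F' x₀ t) x₀ := by
      intro x₀
      have hFc : Continuous (Function.uncurry F) := hF.continuous
      have hF'cont : Continuous (Function.uncurry F') := hF'c.continuous
      obtain ⟨C, hC⟩ :=
        ((isCompact_closedBall x₀ 1).prod isCompact_Icc).exists_bound_of_continuousOn
          (hF'cont.continuousOn (s := Metric.closedBall x₀ 1 ×ˢ Icc (0:ℝ) 1))
      apply intervalIntegral.hasFDerivAt_integral_of_dominated_of_fderiv_le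
        (𝕜 := ℝ) (s := Metric.ball x₀ 1) (bound := fun _ => C) (Metric.ball_mem_nhds x₀ one_pos)
      · exact Filter.Eventually.of_forall fun x =>
          (hFc.comp (Continuous.prodMk_right x)).aestronglyMeasurable
      · exact (hFc.comp (Continuous.prodMk_right x₀)).intervalIntegrable 0 1
      · exact (hF'cont.comp (Continuous.prodMk_right x₀)).aestronglyMeasurable
      · refine Filter.Eventually.of_forall fun t ht x hx => ?_
        exact hC (x, t) ⟨Metric.ball_subset_closedBall hx,
          Ioc_subset_Icc_self (by rwa [Set.uIoc_of_le (zero_le_one)] at ht)⟩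
      · exact intervalIntegrable_const
      · refine Filter.Eventually.of_forall fun t ht x hx => ?_
        have hd : ContDiff ℝ ((n+1 : ℕ) : WithTop ℕ∞) (fun y : ℝ × ℝ => F y t) :=
          hF.comp (contDiff_id.prodMk contDiff_const)
        exact (hd.differentiable (ne_of_gt (lt_of_lt_of_le zero_lt_one h1n)) x).hasFDerivAt
    rw [show ((n+1 : ℕ) : WithTop ℕ∞) = ((n : ℕ) : WithTop ℕ∞) + 1 by norm_cast]
    rw [contDiff_succ_iff_fderiv]
    refine ⟨fun x => (key x).differentiableAt, ?_, ?_⟩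
    · intro h; exact absurd h (by simp)
    · have heq : fderiv ℝ (fun x => ∫ t in (0:ℝ)..1, F x t)
          = fun x => ∫ t in (0:ℝ)..1, F' x t := funext fun x => (key x).fderiv
      rw [heq]
      exact ih F' hF'c

/-- The shock-speed (divided-difference) function
`s(u₋,u₊) = (f(u₊) - f(u₋))/(u₊ - u₋)`, extended by `s(u,u) = f'(u)`. -/
noncomputable def divDiff (f : ℝ → ℝ) (p : ℝ × ℝ) : ℝ :=
  if p.1 = p.2 then deriv f p.1 else (f p.2 - f p.1) / (p.2 - p.1)

/-- The amplification factor along the Rankine–Hugoniot curve: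
`r(u₋,u₊) = ((s - a(u₊))/(s - a(u₋))) · exp(A(u₋) - A(u₊))`. -/
noncomputable def rFun (f a A : ℝ → ℝ) (p : ℝ × ℝ) : ℝ :=
  ((divDiff f p - a p.2) / (divDiff f p - a p.1)) * Real.exp (A p.1 - A p.2)

lemma divDiff_integral_rep (f : ℝ → ℝ) (hf : ContDiff ℝ 4 f) :
    divDiff f = fun p : ℝ × ℝ => ∫ t in (0:ℝ)..1, deriv f (p.1 + (p.2 - p.1) * t) := by
  have hfd : Differentiable ℝ f := hf.differentiable (by norm_num)
  have hdc : Continuous (deriv f) := hf.continuous_deriv (by norm_num)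
  funext p
  by_cases h : p.1 = p.2
  · simp [divDiff, h]
  · simp only [divDiff, if_neg h]
    rw [intervalIntegral.integral_comp_add_mul (deriv f) (sub_ne_zero.2 (Ne.symm h)) p.1]
    rw [intervalIntegral.integral_eq_sub_of_hasDerivAt
      (fun x _ => (hfd x).hasDerivAt) (hdc.intervalIntegrable _ _)]
    rw [show p.1 + (p.2 - p.1) * 1 = p.2 by ring, show p.1 + (p.2 - p.1) * 0 = p.1 by ring]
    rw [smul_eq_mul, inv_mul_eq_div]

lemma divDiff_contDiff (f : ℝ → ℝ) (hf : ContDiff ℝ 4 f) :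
    ContDiff ℝ 3 (divDiff f) := by
  have hdf : ContDiff ℝ 3 (deriv f) := by
    have h4 : ContDiff ℝ ((3 : WithTop ℕ∞) + 1) f := by
      rw [show ((3 : WithTop ℕ∞) + 1) = 4 by norm_num]; exact hf
    exact (contDiff_succ_iff_deriv.mp h4).2.2
  rw [divDiff_integral_rep f hf]
  have h3 : ContDiff ℝ ((3:ℕ) : WithTop ℕ∞)
      (fun x : ℝ × ℝ => ∫ t in (0:ℝ)..1,
        (fun (q : ℝ × ℝ) (t : ℝ) => deriv f (q.1 + (q.2 - q.1) * t)) x t) := by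
    apply contDiff_param 3
    have heq : Function.uncurry (fun (q : ℝ × ℝ) (t : ℝ) => deriv f (q.1 + (q.2 - q.1) * t))
        = deriv f ∘ (fun z : (ℝ × ℝ) × ℝ => z.1.1 + (z.1.2 - z.1.1) * z.2) := rfl
    rw [heq]
    refine ContDiff.comp ?_ ?_
    · exact_mod_cast hdf
    · exact (contDiff_fst.fst.add ((contDiff_fst.snd.sub contDiff_fst.fst).mul contDiff_snd))
  exact_mod_cast h3

/-- Under uniform strict hyperbolicity, `r` is well defined (nonvanishing
denominators), of class `C³` on `[-M,M]²`, and positive; consequently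
`Z₋ = Z₊ · r(u₋,u₊)` vanishes iff `Z₊` does, and has the sign of `Z₊`. -/
theorem rFun_wellDefined_pos (M : ℝ) (hM : 0 < M) (f a A : ℝ → ℝ)
    (hf : ContDiff ℝ 4 f) (ha : ContDiff ℝ 3 a)
    (hUSH : sSup (a '' Icc (-M) M) < sInf (deriv f '' Icc (-M) M))
    (hA : ∀ ξ ∈ Icc (-M) M, HasDerivAt A (deriv a ξ / (a ξ - deriv f ξ)) ξ) :
    (∀ p ∈ Icc (-M) M ×ˢ Icc (-M) M,
      divDiff f p - a p.1 ≠ 0 ∧ divDiff f p - a p.2 ≠ 0) ∧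
    ContDiffOn ℝ 3 (rFun f a A) (Icc (-M) M ×ˢ Icc (-M) M) ∧
    (∀ p ∈ Icc (-M) M ×ˢ Icc (-M) M, 0 < rFun f a A p) ∧
    (∀ p ∈ Icc (-M) M ×ˢ Icc (-M) M, ∀ Zp : ℝ,
      (Zp = 0 → Zp * rFun f a A p = 0) ∧
      (Zp ≠ 0 → 0 < (Zp * rFun f a A p) * Zp)) := by
  have hfd : Differentiable ℝ f := hf.differentiable (by norm_num)
  have hdc : Continuous (deriv f) := hf.continuous_deriv (by norm_num)
  -- the divided difference takes values among values of deriv f on the interval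
  have hmvt : ∀ p : ℝ × ℝ, p ∈ Icc (-M) M ×ˢ Icc (-M) M →
      ∃ ξ ∈ Icc (-M) M, divDiff f p = deriv f ξ := by
    rintro ⟨x, y⟩ ⟨hx, hy⟩
    rcases lt_trichotomy x y with h | h | h
    · obtain ⟨c, hc, hc2⟩ := exists_hasDerivAt_eq_slope f (deriv f) h
        hfd.continuous.continuousOn (fun z _ => (hfd z).hasDerivAt)
      refine ⟨c, ⟨by linarith [hx.1, hc.1.le], by linarith [hy.2, hc.2.le]⟩, ?_⟩
      simp only [divDiff, if_neg (ne_of_lt h)]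
      exact hc2.symm
    · exact ⟨x, hx, by simp [divDiff, h]⟩
    · obtain ⟨c, hc, hc2⟩ := exists_hasDerivAt_eq_slope f (deriv f) h
        hfd.continuous.continuousOn (fun z _ => (hfd z).hasDerivAt)
      refine ⟨c, ⟨by linarith [hy.1, hc.1.le], by linarith [hx.2, hc.2.le]⟩, ?_⟩
      simp only [divDiff, if_neg (ne_of_gt h)]
      rw [hc2, show f x - f y = -(f y - f x) by ring, show x - y = -(y - x) by ring,
        neg_div_neg_eq]
  have hIcc_ne : (Icc (-M) M).Nonempty := ⟨0, by constructor <;> linarith⟩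
  have hSa : ∀ ξ ∈ Icc (-M) M, a ξ ≤ sSup (a '' Icc (-M) M) := fun ξ hξ =>
    le_csSup (isCompact_Icc.image ha.continuous).bddAbove (mem_image_of_mem a hξ)
  have hIf : ∀ ξ ∈ Icc (-M) M, sInf (deriv f '' Icc (-M) M) ≤ deriv f ξ := fun ξ hξ =>
    csInf_le (isCompact_Icc.image hdc).bddBelow (mem_image_of_mem (deriv f) hξ)
  have hpos : ∀ p ∈ Icc (-M) M ×ˢ Icc (-M) M,
      0 < divDiff f p - a p.1 ∧ 0 < divDiff f p - a p.2 := by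
    intro p hp
    have hp1 : p.1 ∈ Icc (-M) M := hp.1
    have hp2 : p.2 ∈ Icc (-M) M := hp.2
    obtain ⟨ξ, hξ, hdd⟩ := hmvt p hp
    have h1 := hSa p.1 hp1
    have h2 := hSa p.2 hp2
    have h3 := hIf ξ hξ
    constructor <;> [skip; skip] <;> rw [hdd] <;> linarith
  have hne : ∀ p ∈ Icc (-M) M ×ˢ Icc (-M) M,
      divDiff f p - a p.1 ≠ 0 ∧ divDiff f p - a p.2 ≠ 0 := fun p hp =>
    ⟨(hpos p hp).1.ne', (hpos p hp).2.ne'⟩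
  -- regularity of A
  have hUD : UniqueDiffOn ℝ (Icc (-M) M) := uniqueDiffOn_Icc (by linarith)
  have haz : ∀ ξ ∈ Icc (-M) M, a ξ - deriv f ξ ≠ 0 := by
    intro ξ hξ
    have := hSa ξ hξ
    have := hIf ξ hξ
    intro h
    have : a ξ = deriv f ξ := by linarith [sub_eq_zero.mp h]
    linarith
  have hA3 : ContDiffOn ℝ 3 A (Icc (-M) M) := by
    rw [show (3 : WithTop ℕ∞) = (2 : WithTop ℕ∞) + 1 by norm_num,
      contDiffOn_succ_iff_derivWithin hUD]
    refine ⟨fun ξ hξ => (hA ξ hξ).differentiableAt.differentiableWithinAt,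
      fun h => absurd h (by simp), ?_⟩
    have hda : ContDiff ℝ 2 (deriv a) := by
      have h3 : ContDiff ℝ ((2 : WithTop ℕ∞) + 1) a := by
        rw [show ((2 : WithTop ℕ∞) + 1) = 3 by norm_num]; exact ha
      exact (contDiff_succ_iff_deriv.mp h3).2.2
    have hdf3 : ContDiff ℝ 3 (deriv f) := by
      have h4 : ContDiff ℝ ((3 : WithTop ℕ∞) + 1) f := by
        rw [show ((3 : WithTop ℕ∞) + 1) = 4 by norm_num]; exact hf
      exact (contDiff_succ_iff_deriv.mp h4).2.2
    have hg : ContDiffOn ℝ 2 (fun ξ => deriv a ξ / (a ξ - deriv f ξ)) (Icc (-M) M) :=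
      ContDiffOn.div hda.contDiffOn
        ((ha.of_le (by norm_num)).contDiffOn.sub (hdf3.of_le (by norm_num)).contDiffOn) haz
    refine hg.congr fun ξ hξ => ?_
    exact ((hA ξ hξ).hasDerivWithinAt).derivWithin (hUD ξ hξ)
  -- regularity of rFun
  have hdd3 : ContDiff ℝ 3 (divDiff f) := divDiff_contDiff f hf
  have hrC : ContDiffOn ℝ 3 (rFun f a A) (Icc (-M) M ×ˢ Icc (-M) M) := by
    have hmap1 : MapsTo (Prod.fst : ℝ × ℝ → ℝ) (Icc (-M) M ×ˢ Icc (-M) M) (Icc (-M) M) :=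
      fun p hp => hp.1
    have hmap2 : MapsTo (Prod.snd : ℝ × ℝ → ℝ) (Icc (-M) M ×ˢ Icc (-M) M) (Icc (-M) M) :=
      fun p hp => hp.2
    have hA1 : ContDiffOn ℝ 3 (fun p : ℝ × ℝ => A p.1) (Icc (-M) M ×ˢ Icc (-M) M) :=
      hA3.comp contDiff_fst.contDiffOn hmap1
    have hA2 : ContDiffOn ℝ 3 (fun p : ℝ × ℝ => A p.2) (Icc (-M) M ×ˢ Icc (-M) M) :=
      hA3.comp contDiff_snd.contDiffOn hmap2
    apply ContDiffOn.mul
    · apply ContDiffOn.div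
      · exact (hdd3.sub (ha.comp contDiff_snd)).contDiffOn
      · exact (hdd3.sub (ha.comp contDiff_fst)).contDiffOn
      · exact fun p hp => (hne p hp).1
    · exact (hA1.sub hA2).exp
  have hrpos : ∀ p ∈ Icc (-M) M ×ˢ Icc (-M) M, 0 < rFun f a A p := by
    intro p hp
    exact mul_pos (div_pos (hpos p hp).2 (hpos p hp).1) (Real.exp_pos _)
  refine ⟨hne, hrC, hrpos, ?_⟩
  intro p hp Zp
  refine ⟨fun h => by rw [h, zero_mul], fun h => ?_⟩
  have : (Zp * rFun f a A p) * Zp = rFun f a A p * (Zp * Zp) := by ring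
  rw [this]
  exact mul_pos (hrpos p hp) (mul_self_pos.mpr h)
end

section
/- Let M > 0, f ∈ C⁴([−M,M]), a ∈ C³([−M,M]), and suppose the uniform strict hyperbolicity condition inf_{|u|≤M} f'(u) > sup_{|u|≤M} a(u) holds. Then there exists a constant C > 0, depending only on f, a and M, such that for all (u₋,u₊) ∈ [−M,M]²: |r(u₋,u₊) − 1| ≤ C |u₊ − u₋|³. In particular, for Z₋ := Z₊ · r(u₋,u₊) one has |Z₋ − Z₊| ≤ C |Z₊| |u₊ − u₋|³. -/
open Real Set

/-- Fundamental bound: if `g` has derivative `g'` on `uIcc 0 d` with `|g'| ≤ C` there,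
then `|g d - g 0| ≤ C * |d|`. -/
lemma integral_bound {g g' : ℝ → ℝ} {d C : ℝ}
    (hd : ∀ t ∈ Set.uIcc (0:ℝ) d, HasDerivAt g (g' t) t)
    (hc : ContinuousOn g' (Set.uIcc (0:ℝ) d))
    (hb : ∀ t ∈ Set.uIcc (0:ℝ) d, |g' t| ≤ C) :
    |g d - g 0| ≤ C * |d| := by
  have hint : IntervalIntegrable g' MeasureTheory.volume 0 d :=
    hc.intervalIntegrable
  have heq : ∫ t in (0:ℝ)..d, g' t = g d - g 0 :=
    intervalIntegral.integral_eq_sub_of_hasDerivAt (fun t ht => hd t ht) hint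
  calc |g d - g 0| = ‖∫ t in (0:ℝ)..d, g' t‖ := by rw [heq]; rfl
    _ ≤ C * |d - 0| := intervalIntegral.norm_integral_le_of_norm_le_const
        (fun x hx => hb x (Set.Ioc_subset_Icc_self hx))
    _ = C * |d| := by rw [sub_zero]

lemma abs_le_abs_of_mem_uIcc {t d : ℝ} (ht : t ∈ Set.uIcc (0:ℝ) d) : |t| ≤ |d| := by
  rcases le_total 0 d with h | h
  · rw [Set.uIcc_of_le h] at ht
    rw [abs_of_nonneg ht.1, abs_of_nonneg h]; exact ht.2
  · rw [Set.uIcc_of_ge h] at ht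
    rw [abs_of_nonpos ht.2, abs_of_nonpos h]; linarith [ht.1]

lemma deriv_quad {g g' : ℝ → ℝ} {d C : ℝ} (hC : 0 ≤ C)
    (hd : ∀ t ∈ Set.uIcc (0:ℝ) d, HasDerivAt g (g' t) t)
    (hc : ContinuousOn g' (Set.uIcc (0:ℝ) d))
    (h0 : g 0 = 0)
    (hb : ∀ t ∈ Set.uIcc (0:ℝ) d, |g' t| ≤ C * |t|) :
    |g d| ≤ C * |d| ^ 2 := by
  have := integral_bound hd hc (C := C * |d|) (fun t ht =>
    (hb t ht).trans (by have := abs_le_abs_of_mem_uIcc ht; nlinarith))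
  rw [h0, sub_zero] at this
  calc |g d| ≤ C * |d| * |d| := this
    _ = C * |d| ^ 2 := by ring

lemma deriv_cubic {g g' : ℝ → ℝ} {d C : ℝ} (hC : 0 ≤ C)
    (hd : ∀ t ∈ Set.uIcc (0:ℝ) d, HasDerivAt g (g' t) t)
    (hc : ContinuousOn g' (Set.uIcc (0:ℝ) d))
    (h0 : g 0 = 0)
    (hb : ∀ t ∈ Set.uIcc (0:ℝ) d, |g' t| ≤ C * t ^ 2) :
    |g d| ≤ C * |d| ^ 3 := by
  have := integral_bound hd hc (C := C * |d| ^ 2) (fun t ht => by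
    refine (hb t ht).trans ?_
    have := abs_le_abs_of_mem_uIcc ht
    have h1 : t ^ 2 = |t| ^ 2 := (sq_abs t).symm
    have h2 : |t| ^ 2 ≤ |d| ^ 2 := pow_le_pow_left₀ (abs_nonneg t) this 2
    nlinarith)
  rw [h0, sub_zero] at this
  calc |g d| ≤ C * |d| ^ 2 * |d| := this
    _ = C * |d| ^ 3 := by ring

/-- Lipschitz bound on `Icc lo hi` from a derivative bound. -/
lemma lip_of_deriv {h h' : ℝ → ℝ} {lo hi K : ℝ}
    (hd : ∀ x ∈ Set.Icc lo hi, HasDerivAt h (h' x) x)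
    (hc : ContinuousOn h' (Set.Icc lo hi))
    (hb : ∀ x ∈ Set.Icc lo hi, |h' x| ≤ K) :
    ∀ x ∈ Set.Icc lo hi, ∀ y ∈ Set.Icc lo hi, |h x - h y| ≤ K * |x - y| := by
  intro x hx y hy
  have hsub : ∀ t ∈ Set.uIcc (0:ℝ) (x - y), y + t ∈ Set.Icc lo hi := by
    intro t ht
    rcases hx with ⟨hx1, hx2⟩; rcases hy with ⟨hy1, hy2⟩
    rcases le_total y x with hxy | hxy
    · rw [Set.uIcc_of_le (by linarith : (0:ℝ) ≤ x - y)] at ht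
      exact ⟨by linarith [ht.1], by linarith [ht.2]⟩
    · rw [Set.uIcc_of_ge (by linarith : x - y ≤ (0:ℝ))] at ht
      exact ⟨by linarith [ht.1], by linarith [ht.2]⟩
  have hD : ∀ t ∈ Set.uIcc (0:ℝ) (x - y),
      HasDerivAt (fun s => h (y + s)) (h' (y + t)) t := by
    intro t ht
    have := (hd (y + t) (hsub t ht)).comp t
      ((hasDerivAt_id t).const_add y)
    simpa [Function.comp_def] using this
  have := integral_bound hD
    ((hc.comp (continuous_const.add continuous_id).continuousOn hsub))
    (fun t ht => hb (y + t) (hsub t ht))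
  simpa using this

lemma contDiff_deriv_of_succ {n : ℕ} {g : ℝ → ℝ} (h : ContDiff ℝ (n + 1) g) :
    ContDiff ℝ n (deriv g) := by
  have h' : ContDiff ℝ ((n : WithTop ℕ∞) + 1) g := by exact_mod_cast h
  exact (contDiff_succ_iff_deriv.mp h').2.2

lemma hasDerivAt_comp_add {h : ℝ → ℝ} {v m t : ℝ} (hd : HasDerivAt h v (m + t)) :
    HasDerivAt (fun s => h (m + s)) v t := by
  simpa [Function.comp_def] using hd.comp t ((hasDerivAt_id t).const_add m)

lemma hasDerivAt_comp_sub {h : ℝ → ℝ} {v m t : ℝ} (hd : HasDerivAt h v (m - t)) :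
    HasDerivAt (fun s => h (m - s)) (-v) t := by
  have h2 : HasDerivAt (fun s : ℝ => m - s) (-1 : ℝ) t := by
    exact (hasDerivAt_id' t).const_sub m
  simpa [mul_comm, Function.comp_def] using hd.comp t h2

set_option maxHeartbeats 2000000 in
/-- **Cubic flatness of the global Rankine–Hugoniot curve.**
Under uniform strict hyperbolicity, `|r(u₋,u₊) - 1| ≤ C |u₊ - u₋|³` on
`[-M,M]²`; in particular `|Z₋ - Z₊| ≤ C |Z₊| |u₊ - u₋|³` for
`Z₋ = Z₊ · r(u₋,u₊)`. -/
theorem rFun_cubic_flatness (M : ℝ) (hM : 0 < M) (f a A : ℝ → ℝ)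
    (hf : ContDiff ℝ 4 f) (ha : ContDiff ℝ 3 a)
    (hUSH : sSup (a '' Icc (-M) M) < sInf (deriv f '' Icc (-M) M))
    (hA : ∀ ξ ∈ Icc (-M) M, HasDerivAt A (deriv a ξ / (a ξ - deriv f ξ)) ξ) :
    ∃ C : ℝ, 0 < C ∧ ∀ um up : ℝ, um ∈ Icc (-M) M → up ∈ Icc (-M) M →
      |rFun f a A (um, up) - 1| ≤ C * |up - um| ^ 3 ∧
      ∀ Zp : ℝ, |Zp * rFun f a A (um, up) - Zp| ≤ C * |Zp| * |up - um| ^ 3 := by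
  set I : Set ℝ := Icc (-M) M with hI
  set f1 := deriv f with hf1def
  set f2 := deriv f1 with hf2def
  set f3 := deriv f2 with hf3def
  set a1 := deriv a with ha1def
  set a2 := deriv a1 with ha2def
  set a3 := deriv a2 with ha3def
  -- regularity
  have hf1 : ContDiff ℝ 3 f1 := contDiff_deriv_of_succ (n := 3) hf
  have hf2 : ContDiff ℝ 2 f2 := contDiff_deriv_of_succ (n := 2) hf1
  have hf3 : ContDiff ℝ 1 f3 := contDiff_deriv_of_succ (n := 1) hf2
  have ha1 : ContDiff ℝ 2 a1 := contDiff_deriv_of_succ (n := 2) ha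
  have ha2 : ContDiff ℝ 1 a2 := contDiff_deriv_of_succ (n := 1) ha1
  have ha3 : ContDiff ℝ 0 a3 := contDiff_deriv_of_succ (n := 0) ha2
  have hfd : ∀ x, HasDerivAt f (f1 x) x :=
    fun x => (hf.differentiable (by norm_num) x).hasDerivAt
  have hf1d : ∀ x, HasDerivAt f1 (f2 x) x :=
    fun x => (hf1.differentiable (by norm_num) x).hasDerivAt
  have hf2d : ∀ x, HasDerivAt f2 (f3 x) x :=
    fun x => (hf2.differentiable (by norm_num) x).hasDerivAt
  have had : ∀ x, HasDerivAt a (a1 x) x :=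
    fun x => (ha.differentiable (by norm_num) x).hasDerivAt
  have ha1d : ∀ x, HasDerivAt a1 (a2 x) x :=
    fun x => (ha1.differentiable (by norm_num) x).hasDerivAt
  have ha2d : ∀ x, HasDerivAt a2 (a3 x) x :=
    fun x => (ha2.differentiable (by norm_num) x).hasDerivAt
  have hca : Continuous a := ha.continuous
  have hca1 : Continuous a1 := ha1.continuous
  have hca2 : Continuous a2 := ha2.continuous
  have hca3 : Continuous a3 := ha3.continuous
  have hcf1 : Continuous f1 := hf1.continuous
  have hcf2 : Continuous f2 := hf2.continuous
  have hcf3 : Continuous f3 := hf3.continuous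
  have hIcomp : IsCompact I := isCompact_Icc
  have h0I : (0:ℝ) ∈ I := ⟨by linarith, by linarith⟩
  -- δ
  set δ := sInf (f1 '' I) - sSup (a '' I) with hδdef
  have hδ : 0 < δ := sub_pos.mpr hUSH
  have hbddf1 : BddBelow (f1 '' I) := (hIcomp.image hcf1).bddBelow
  have hbdda : BddAbove (a '' I) := (hIcomp.image hca).bddAbove
  have hf1lb : ∀ x ∈ I, sInf (f1 '' I) ≤ f1 x := fun x hx => csInf_le hbddf1 ⟨x, hx, rfl⟩
  have haub : ∀ x ∈ I, a x ≤ sSup (a '' I) := fun x hx => le_csSup hbdda ⟨x, hx, rfl⟩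
  -- ψ
  set U : Set ℝ := {x | a x - f1 x ≠ 0} with hUdef
  have hUopen : IsOpen U := isOpen_ne_fun (hca.sub hcf1) continuous_const
  have hIU : I ⊆ U := by
    intro x hx
    have h1 := hf1lb x hx; have h2 := haub x hx
    simp only [hUdef, mem_setOf_eq]
    intro h; rw [sub_eq_zero] at h; nlinarith
  set ψ : ℝ → ℝ := fun x => a1 x / (a x - f1 x) with hψdef
  have hψcd : ContDiffOn ℝ 2 ψ U :=
    ContDiffOn.div (ha1.contDiffOn)
      ((ha.of_le (by norm_num)).sub (hf1.of_le (by norm_num))).contDiffOn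
      (fun x hx => hx)
  set ψ' := deriv ψ with hψ'def
  set ψ'' := deriv ψ' with hψ''def
  have hψd : ∀ x ∈ U, HasDerivAt ψ (ψ' x) x := by
    intro x hx
    exact ((hψcd.differentiableOn (by norm_num)).differentiableAt
      (hUopen.mem_nhds hx)).hasDerivAt
  have hψ'cd : ContDiffOn ℝ 1 ψ' U := by
    have h2 : ContDiffOn ℝ ((1 : WithTop ℕ∞) + 1) ψ U := by exact_mod_cast hψcd
    exact ((contDiffOn_succ_iff_deriv_of_isOpen hUopen).mp h2).2.2
  have hψ'd : ∀ x ∈ U, HasDerivAt ψ' (ψ'' x) x := by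
    intro x hx
    exact ((hψ'cd.differentiableOn (by norm_num)).differentiableAt
      (hUopen.mem_nhds hx)).hasDerivAt
  have hψ'cont : ContinuousOn ψ' U := hψ'cd.continuousOn
  have hψ''cont : ContinuousOn ψ'' U :=
    hψ'cd.continuousOn_deriv_of_isOpen hUopen (by norm_num)
  have hψcont : ContinuousOn ψ U := hψcd.continuousOn
  have hAcont : ContinuousOn A I := fun x hx => (hA x hx).continuousAt.continuousWithinAt
  -- bounds
  obtain ⟨Ka0, hKa0⟩ := hIcomp.exists_bound_of_continuousOn hca.continuousOn
  obtain ⟨Ka1, hKa1⟩ := hIcomp.exists_bound_of_continuousOn hca1.continuousOn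
  obtain ⟨Ka2, hKa2⟩ := hIcomp.exists_bound_of_continuousOn hca2.continuousOn
  obtain ⟨Ka3, hKa3⟩ := hIcomp.exists_bound_of_continuousOn hca3.continuousOn
  obtain ⟨Kf1, hKf1⟩ := hIcomp.exists_bound_of_continuousOn hcf1.continuousOn
  obtain ⟨Kf3, hKf3⟩ := hIcomp.exists_bound_of_continuousOn hcf3.continuousOn
  obtain ⟨Kψ2, hKψ2⟩ := hIcomp.exists_bound_of_continuousOn (hψ''cont.mono hIU)
  obtain ⟨KA, hKA⟩ := hIcomp.exists_bound_of_continuousOn hAcont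
  have hKa0p : 0 ≤ Ka0 := le_trans (norm_nonneg _) (hKa0 0 h0I)
  have hKa1p : 0 ≤ Ka1 := le_trans (norm_nonneg _) (hKa1 0 h0I)
  have hKa2p : 0 ≤ Ka2 := le_trans (norm_nonneg _) (hKa2 0 h0I)
  have hKa3p : 0 ≤ Ka3 := le_trans (norm_nonneg _) (hKa3 0 h0I)
  have hKf1p : 0 ≤ Kf1 := le_trans (norm_nonneg _) (hKf1 0 h0I)
  have hKf3p : 0 ≤ Kf3 := le_trans (norm_nonneg _) (hKf3 0 h0I)
  have hKψ2p : 0 ≤ Kψ2 := le_trans (norm_nonneg _) (hKψ2 0 h0I)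
  have hKAp : 0 ≤ KA := le_trans (norm_nonneg _) (hKA 0 h0I)
  -- Lipschitz facts on I
  have hLa : ∀ x ∈ I, ∀ y ∈ I, |a x - a y| ≤ Ka1 * |x - y| :=
    lip_of_deriv (fun x _ => had x) hca1.continuousOn (fun x hx => by simpa using hKa1 x hx)
  have hLa1 : ∀ x ∈ I, ∀ y ∈ I, |a1 x - a1 y| ≤ Ka2 * |x - y| :=
    lip_of_deriv (fun x _ => ha1d x) hca2.continuousOn (fun x hx => by simpa using hKa2 x hx)
  have hLa2 : ∀ x ∈ I, ∀ y ∈ I, |a2 x - a2 y| ≤ Ka3 * |x - y| :=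
    lip_of_deriv (fun x _ => ha2d x) hca3.continuousOn (fun x hx => by simpa using hKa3 x hx)
  have hLf2 : ∀ x ∈ I, ∀ y ∈ I, |f2 x - f2 y| ≤ Kf3 * |x - y| :=
    lip_of_deriv (fun x _ => hf2d x) hcf3.continuousOn (fun x hx => by simpa using hKf3 x hx)
  have hLψ' : ∀ x ∈ I, ∀ y ∈ I, |ψ' x - ψ' y| ≤ Kψ2 * |x - y| :=
    lip_of_deriv (fun x hx => hψ'd x (hIU hx)) (hψ''cont.mono hIU)
      (fun x hx => by simpa using hKψ2 x hx)
  -- constants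
  set d₀ : ℝ := δ / (8 * (Ka1 + 1)) with hd₀def
  have hd₀ : 0 < d₀ := by
    apply div_pos hδ; nlinarith
  set KD : ℝ := Kf1 + Ka0 with hKDdef
  have hKDp : 0 ≤ KD := by simp only [hKDdef]; linarith
  set c1 : ℝ := 2 * Ka3 with hc1def
  have hc1p : 0 ≤ c1 := by simp only [hc1def]; linarith
  set c2 : ℝ := Kf3 + Ka2 with hc2def
  have hc2p : 0 ≤ c2 := by simp only [hc2def]; linarith
  set CA : ℝ := (c1 * KD ^ 2 + 2 * Ka1 * KD * c2 + 2 * Ka1 ^ 3 + 2 * Ka1 ^ 2 * c2 * M) / δ ^ 3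
    with hCAdef
  have hCAp : 0 ≤ CA := by
    apply div_nonneg _ (by positivity)
    have h1 : 0 ≤ c1 * KD ^ 2 := mul_nonneg hc1p (sq_nonneg KD)
    have h2 : 0 ≤ 2 * Ka1 * KD * c2 := mul_nonneg (mul_nonneg (by linarith) hKDp) hc2p
    have h3 : 0 ≤ 2 * Ka1 ^ 3 := by nlinarith
    have h4 : 0 ≤ 2 * Ka1 ^ 2 * c2 * M :=
      mul_nonneg (mul_nonneg (mul_nonneg (by norm_num) (sq_nonneg _)) hc2p) hM.le
    linarith
  set cw : ℝ := 2 * Ka1 ^ 2 / δ ^ 2 + CA * M with hcwdef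
  have hcwp : 0 ≤ cw := by
    have h1 : 0 ≤ 2 * Ka1 ^ 2 / δ ^ 2 := div_nonneg (by positivity) (by positivity)
    have h2 : 0 ≤ CA * M := mul_nonneg hCAp hM.le
    simp only [hcwdef]; linarith
  set CB : ℝ := 2 * Ka1 * cw / δ + cw ^ 2 * M / 2 with hCBdef
  have hCBp : 0 ≤ CB := by
    have h1 : 0 ≤ 2 * Ka1 * cw / δ := div_nonneg (mul_nonneg (by linarith) hcwp) hδ.le
    have h2 : 0 ≤ cw ^ 2 * M / 2 := by positivity
    simp only [hCBdef]; linarith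
  set clog : ℝ := 2 * (2 * Ka1 / δ) ^ 3 with hclogdef
  have hclogp : 0 ≤ clog := by
    have h1 : 0 ≤ 2 * Ka1 / δ := div_nonneg (by linarith) hδ.le
    simp only [hclogdef]; positivity
  set Cφ : ℝ := clog + CA + CB + 2 * Kψ2 with hCφdef
  have hCφp : 0 ≤ Cφ := by simp only [hCφdef]; linarith
  set B : ℝ := (Kf1 + Ka0) / δ * Real.exp (2 * KA) + 1 with hBdef
  have hBp : 0 < B := by
    have h1 : 0 ≤ (Kf1 + Ka0) / δ * Real.exp (2 * KA) :=
      mul_nonneg (div_nonneg (by linarith) hδ.le) (Real.exp_pos _).le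
    simp only [hBdef]; linarith
  set Cfin : ℝ := 2 * Cφ + B * Cφ + B / d₀ ^ 3 + 1 with hCfindef
  have hCfinp : 0 < Cfin := by
    have h1 : 0 ≤ B * Cφ := mul_nonneg hBp.le hCφp
    have h2 : 0 ≤ B / d₀ ^ 3 := div_nonneg hBp.le (by positivity)
    simp only [hCfindef]; linarith
  clear_value δ KD c2 CA cw CB clog
  refine ⟨Cfin, hCfinp, ?_⟩
  intro um up hum hup
  set m : ℝ := (um + up) / 2 with hmdef
  set d : ℝ := (up - um) / 2 with hddef
  have hum' : um = m - d := by simp only [hmdef, hddef]; ring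
  have hup' : up = m + d := by simp only [hmdef, hddef]; ring
  have e1' : m - d = um := hum'.symm
  have e2' : m + d = up := hup'.symm
  have hm : m ∈ I := by
    constructor
    · have : 2 * m = um + up := by simp only [hmdef]; ring
      linarith [hum.1, hup.1]
    · have : 2 * m = um + up := by simp only [hmdef]; ring
      linarith [hum.2, hup.2]
  have hdM : |d| ≤ M := by
    rw [abs_le]
    constructor <;> simp only [hddef] <;> linarith [hum.1, hum.2, hup.1, hup.2]
  have hmem : ∀ t ∈ Set.uIcc (0:ℝ) d, m + t ∈ I ∧ m - t ∈ I := by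
    intro t ht
    rcases le_total 0 d with h | h
    · rw [Set.uIcc_of_le h] at ht
      exact ⟨⟨by linarith [hum.1, ht.1], by linarith [hup.2, ht.2]⟩,
             ⟨by linarith [hum.1, ht.2], by linarith [hup.2, ht.1]⟩⟩
    · rw [Set.uIcc_of_ge h] at ht
      exact ⟨⟨by linarith [hup.1, ht.1], by linarith [hum.2, ht.2]⟩,
             ⟨by linarith [hup.1, ht.2], by linarith [hum.2, ht.1]⟩⟩
  have hmdI : m - d ∈ I := e1' ▸ hum
  have hpdI : m + d ∈ I := e2' ▸ hup
  have hcomp1 : ∀ (h : ℝ → ℝ), Continuous h → Continuous (fun t : ℝ => h (m + t)) :=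
    fun h hh => hh.comp (continuous_const.add continuous_id)
  have hcomp2 : ∀ (h : ℝ → ℝ), Continuous h → Continuous (fun t : ℝ => h (m - t)) :=
    fun h hh => hh.comp (continuous_const.sub continuous_id)
  -- the divided difference
  set S : ℝ := divDiff f (um, up) with hSdef
  have hS_diag : um = up → S = f1 um := fun h => by
    simp only [hSdef, divDiff, h, if_pos, hf1def]
  have hS_slope : um ≠ up → S = (f up - f um) / (up - um) := fun h => by
    simp only [hSdef, divDiff, if_neg h]
  have hmean : ∃ ξ ∈ I, S = f1 ξ := by
    rcases lt_trichotomy um up with h | h | h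
    · obtain ⟨c, hc, hceq⟩ := exists_hasDerivAt_eq_slope f f1 h
        hf.continuous.continuousOn (fun x _ => hfd x)
      refine ⟨c, ⟨by linarith [hum.1, hc.1], by linarith [hup.2, hc.2]⟩, ?_⟩
      rw [hS_slope h.ne]; exact hceq.symm
    · exact ⟨um, hum, hS_diag h⟩
    · obtain ⟨c, hc, hceq⟩ := exists_hasDerivAt_eq_slope f f1 h
        hf.continuous.continuousOn (fun x _ => hfd x)
      refine ⟨c, ⟨by linarith [hup.1, hc.1], by linarith [hum.2, hc.2]⟩, ?_⟩
      rw [hS_slope (ne_of_gt h)]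
      rw [hceq]
      have hne : um - up ≠ 0 := sub_ne_zero.mpr (ne_of_gt h)
      have hne2 : up - um ≠ 0 := sub_ne_zero.mpr (ne_of_lt h)
      field_simp
      ring
  have hSabs : |S| ≤ Kf1 := by
    obtain ⟨ξ, hξ, hSe⟩ := hmean
    rw [hSe]; simpa using hKf1 ξ hξ
  have hSma : ∀ u ∈ I, δ ≤ S - a u := by
    intro u hu
    obtain ⟨ξ, hξ, hSe⟩ := hmean
    have h1 := hf1lb ξ hξ
    have h2 := haub u hu
    simp only [hδdef]
    rw [hSe]
    linarith only [h1, h2]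
  set Sm : ℝ := S - a (m - d) with hSmdef
  set Sp : ℝ := S - a (m + d) with hSpdef
  have hSm : δ ≤ Sm := hSma _ hmdI
  have hSp : δ ≤ Sp := hSma _ hpdI
  have hSmpos : 0 < Sm := lt_of_lt_of_le hδ hSm
  have hSppos : 0 < Sp := lt_of_lt_of_le hδ hSp
  have hSmne : Sm ≠ 0 := ne_of_gt hSmpos
  -- E1
  have E1 : |a (m - d) - a (m + d) + 2 * a1 m * d| ≤ c1 * |d| ^ 3 := by
    refine deriv_cubic (g := fun t => a (m - t) - a (m + t) + 2 * a1 m * t)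
      (g' := fun t => -a1 (m - t) - a1 (m + t) + 2 * a1 m) (d := d) (C := c1)
      hc1p ?_ ?_ (by simp) ?_
    · intro t ht
      have h1 := hasDerivAt_comp_sub (had (m - t))
      have h2 := hasDerivAt_comp_add (had (m + t))
      have h3 : HasDerivAt (fun s : ℝ => 2 * a1 m * s) (2 * a1 m) t := by
        simpa using (hasDerivAt_id t).const_mul (2 * a1 m)
      exact (h1.sub h2).add h3
    · exact (((hcomp2 a1 hca1).neg.sub (hcomp1 a1 hca1)).add continuous_const).continuousOn
    · intro t ht
      have hsub := Set.uIcc_subset_uIcc (Set.left_mem_uIcc (a := (0:ℝ)) (b := d)) ht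
      have inner : |-a1 (m - t) - a1 (m + t) + 2 * a1 m| ≤ 2 * Ka3 * |t| ^ 2 := by
        refine deriv_quad (g := fun s => -a1 (m - s) - a1 (m + s) + 2 * a1 m)
          (g' := fun s => a2 (m - s) - a2 (m + s)) (d := t) (C := 2 * Ka3)
          (by linarith only [hKa3p]) ?_ ?_ (by simp; ring) ?_
        · intro s hs
          have h1 := hasDerivAt_comp_sub (ha1d (m - s))
          have h2 := hasDerivAt_comp_add (ha1d (m + s))
          have := (h1.neg.sub h2).add_const (2 * a1 m)
          exact this.congr_deriv (by ring)
        · exact ((hcomp2 a2 hca2).sub (hcomp1 a2 hca2)).continuousOn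
        · intro s hs
          have hsI := hmem s (hsub hs)
          have hl := hLa2 (m - s) hsI.2 (m + s) hsI.1
          have he : (m - s) - (m + s) = -(2 * s) := by ring
          rw [he, abs_neg, abs_mul] at hl
          have : |(2:ℝ)| = 2 := by norm_num
          rw [this] at hl
          linarith only [hl]
      calc |-a1 (m - t) - a1 (m + t) + 2 * a1 m| ≤ 2 * Ka3 * |t| ^ 2 := inner
        _ = c1 * t ^ 2 := by rw [sq_abs]
  -- E2
  have E2 : |S - f1 m| ≤ Kf3 * d ^ 2 := by
    by_cases hde : um = up
    · have hd0 : d = 0 := by simp only [hddef]; rw [hde]; ring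
      have hmu : m = um := by simp only [hmdef]; rw [hde]; ring
      rw [hS_diag hde, hmu, sub_self, abs_zero]
      positivity
    · have hdne : d ≠ 0 := by
        simp only [hddef]
        intro h
        apply hde
        have : up - um = 0 := by linarith [h, (div_eq_zero_iff).mp h]
        linarith [sub_eq_zero.mp this]
      have main : |f (m + d) - f (m - d) - 2 * f1 m * d| ≤ 2 * Kf3 * |d| ^ 3 := by
        refine deriv_cubic (g := fun t => f (m + t) - f (m - t) - 2 * f1 m * t)
          (g' := fun t => f1 (m + t) + f1 (m - t) - 2 * f1 m) (d := d) (C := 2 * Kf3)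
          (by linarith only [hKf3p]) ?_ ?_ (by simp) ?_
        · intro t ht
          have h1 := hasDerivAt_comp_add (hfd (m + t))
          have h2 := hasDerivAt_comp_sub (hfd (m - t))
          have h3 : HasDerivAt (fun s : ℝ => 2 * f1 m * s) (2 * f1 m) t := by
            simpa using (hasDerivAt_id t).const_mul (2 * f1 m)
          have := (h1.sub h2).sub h3
          exact this.congr_deriv (by ring)
        · exact (((hcomp1 f1 hcf1).add (hcomp2 f1 hcf1)).sub continuous_const).continuousOn
        · intro t ht
          have hsub := Set.uIcc_subset_uIcc (Set.left_mem_uIcc (a := (0:ℝ)) (b := d)) ht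
          have inner : |f1 (m + t) + f1 (m - t) - 2 * f1 m| ≤ 2 * Kf3 * |t| ^ 2 := by
            refine deriv_quad (g := fun s => f1 (m + s) + f1 (m - s) - 2 * f1 m)
              (g' := fun s => f2 (m + s) - f2 (m - s)) (d := t) (C := 2 * Kf3)
              (by linarith only [hKf3p]) ?_ ?_ (by simp; ring) ?_
            · intro s hs
              have h1 := hasDerivAt_comp_add (hf1d (m + s))
              have h2 := hasDerivAt_comp_sub (hf1d (m - s))
              have := (h1.add h2).sub_const (2 * f1 m)
              exact this.congr_deriv (by ring)
            · exact ((hcomp1 f2 hcf2).sub (hcomp2 f2 hcf2)).continuousOn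
            · intro s hs
              have hsI := hmem s (hsub hs)
              have hl := hLf2 (m + s) hsI.1 (m - s) hsI.2
              have he : (m + s) - (m - s) = 2 * s := by ring
              rw [he, abs_mul] at hl
              have h2 : |(2:ℝ)| = 2 := by norm_num
              rw [h2] at hl
              linarith only [hl]
          calc |f1 (m + t) + f1 (m - t) - 2 * f1 m| ≤ 2 * Kf3 * |t| ^ 2 := inner
            _ = 2 * Kf3 * t ^ 2 := by rw [sq_abs]
      have key : S - f1 m = (f (m + d) - f (m - d) - 2 * f1 m * d) / (2 * d) := by
        rw [hS_slope hde, hum', hup']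
        have h2d : m + d - (m - d) = 2 * d := by ring
        rw [h2d]
        field_simp
      rw [key, abs_div]
      have h2d : |2 * d| = 2 * |d| := by rw [abs_mul]; norm_num
      rw [h2d]
      have hdpos : 0 < |d| := abs_pos.mpr hdne
      rw [div_le_iff₀ (by linarith only [hdpos])]
      calc |f (m + d) - f (m - d) - 2 * f1 m * d| ≤ 2 * Kf3 * |d| ^ 3 := main
        _ = Kf3 * d ^ 2 * (2 * |d|) := by rw [← sq_abs d]; ring
  -- E3
  have E3 : |a (m - d) - a m + a1 m * d| ≤ Ka2 * d ^ 2 := by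
    have main : |a (m - d) - a m + a1 m * d| ≤ Ka2 * |d| ^ 2 := by
      refine deriv_quad (g := fun t => a (m - t) - a m + a1 m * t)
        (g' := fun t => -a1 (m - t) + a1 m) (d := d) (C := Ka2)
        hKa2p ?_ ?_ (by simp) ?_
      · intro t ht
        have h1 := hasDerivAt_comp_sub (had (m - t))
        have h3 : HasDerivAt (fun s : ℝ => a1 m * s) (a1 m) t := by
          simpa using (hasDerivAt_id t).const_mul (a1 m)
        have := (h1.sub_const (a m)).add h3
        exact this.congr_deriv (by ring)
      · exact (((hcomp2 a1 hca1).neg).add continuous_const).continuousOn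
      · intro t ht
        have htI := hmem t ht
        have hl := hLa1 m hm (m - t) htI.2
        have he : m - (m - t) = t := by ring
        rw [he] at hl
        have heq : |-a1 (m - t) + a1 m| = |a1 m - a1 (m - t)| := by
          rw [neg_add_eq_sub]
        rw [heq]
        linarith only [hl]
    calc |a (m - d) - a m + a1 m * d| ≤ Ka2 * |d| ^ 2 := main
      _ = Ka2 * d ^ 2 := by rw [sq_abs]
  -- E4
  have hAd : ∀ ξ ∈ I, HasDerivAt A (ψ ξ) ξ := fun ξ hξ => hA ξ hξ
  have hψcI : ContinuousOn ψ I := hψcont.mono hIU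
  have hψ'cI : ContinuousOn ψ' I := hψ'cont.mono hIU
  have E4 : |A (m + d) - A (m - d) - 2 * ψ m * d| ≤ 2 * Kψ2 * |d| ^ 3 := by
    refine deriv_cubic (g := fun t => A (m + t) - A (m - t) - 2 * ψ m * t)
      (g' := fun t => ψ (m + t) + ψ (m - t) - 2 * ψ m) (d := d) (C := 2 * Kψ2)
      (by linarith only [hKψ2p]) ?_ ?_ (by simp) ?_
    · intro t ht
      have htI := hmem t ht
      have h1 := hasDerivAt_comp_add (hAd (m + t) htI.1)
      have h2 := hasDerivAt_comp_sub (hAd (m - t) htI.2)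
      have h3 : HasDerivAt (fun s : ℝ => 2 * ψ m * s) (2 * ψ m) t := by
        simpa using (hasDerivAt_id t).const_mul (2 * ψ m)
      have := (h1.sub h2).sub h3
      exact this.congr_deriv (by ring)
    · have c1' : ContinuousOn (fun t : ℝ => ψ (m + t)) (Set.uIcc (0:ℝ) d) :=
        hψcI.comp (continuous_const.add continuous_id).continuousOn
          (fun s hs => (hmem s hs).1)
      have c2'' : ContinuousOn (fun t : ℝ => ψ (m - t)) (Set.uIcc (0:ℝ) d) :=
        hψcI.comp (continuous_const.sub continuous_id).continuousOn
          (fun s hs => (hmem s hs).2)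
      exact ((c1'.add c2'').sub continuousOn_const)
    · intro t ht
      have hsub := Set.uIcc_subset_uIcc (Set.left_mem_uIcc (a := (0:ℝ)) (b := d)) ht
      have inner : |ψ (m + t) + ψ (m - t) - 2 * ψ m| ≤ 2 * Kψ2 * |t| ^ 2 := by
        refine deriv_quad (g := fun s => ψ (m + s) + ψ (m - s) - 2 * ψ m)
          (g' := fun s => ψ' (m + s) - ψ' (m - s)) (d := t) (C := 2 * Kψ2)
          (by linarith only [hKψ2p]) ?_ ?_ (by simp; ring) ?_
        · intro s hs
          have hsI := hmem s (hsub hs)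
          have h1 := hasDerivAt_comp_add (hψd (m + s) (hIU hsI.1))
          have h2 := hasDerivAt_comp_sub (hψd (m - s) (hIU hsI.2))
          have := (h1.add h2).sub_const (2 * ψ m)
          exact this.congr_deriv (by ring)
        · have c1' : ContinuousOn (fun s : ℝ => ψ' (m + s)) (Set.uIcc (0:ℝ) t) :=
            hψ'cI.comp (continuous_const.add continuous_id).continuousOn
              (fun s hs => (hmem s (hsub hs)).1)
          have c2'' : ContinuousOn (fun s : ℝ => ψ' (m - s)) (Set.uIcc (0:ℝ) t) :=
            hψ'cI.comp (continuous_const.sub continuous_id).continuousOn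
              (fun s hs => (hmem s (hsub hs)).2)
          exact c1'.sub c2''
        · intro s hs
          have hsI := hmem s (hsub hs)
          have hl := hLψ' (m + s) hsI.1 (m - s) hsI.2
          have he : (m + s) - (m - s) = 2 * s := by ring
          rw [he, abs_mul] at hl
          have h2 : |(2:ℝ)| = 2 := by norm_num
          rw [h2] at hl
          linarith only [hl]
      calc |ψ (m + t) + ψ (m - t) - 2 * ψ m| ≤ 2 * Kψ2 * |t| ^ 2 := inner
        _ = 2 * Kψ2 * t ^ 2 := by rw [sq_abs]
  -- the algebraic expansion
  have habs1 : |a1 m| ≤ Ka1 := by simpa using hKa1 m hm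
  have hd2 : d ^ 2 = |d| ^ 2 := (sq_abs d).symm
  have hAd0 : (0:ℝ) ≤ |d| := abs_nonneg d
  set D : ℝ := f1 m - a m with hDdef
  have hD : δ ≤ D := by
    have h1 := hf1lb m hm
    have h2 := haub m hm
    simp only [hDdef, hδdef]
    linarith only [h1, h2]
  have hDpos : 0 < D := lt_of_lt_of_le hδ hD
  have hDne : D ≠ 0 := ne_of_gt hDpos
  have hDabs : |D| ≤ KD := by
    have h1 : |f1 m| ≤ Kf1 := by simpa using hKf1 m hm
    have h2 : |a m| ≤ Ka0 := by simpa using hKa0 m hm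
    simp only [hDdef, hKDdef]
    calc |f1 m - a m| = |f1 m + -(a m)| := by rw [sub_eq_add_neg]
      _ ≤ |f1 m| + |-(a m)| := abs_add_le _ _
      _ = |f1 m| + |a m| := by rw [abs_neg]
      _ ≤ Kf1 + Ka0 := add_le_add h1 h2
  set e : ℝ := Sm - D - a1 m * d with hedef
  have he : |e| ≤ c2 * d ^ 2 := by
    have key : e = (S - f1 m) - (a (m - d) - a m + a1 m * d) := by
      simp only [hedef, hSmdef, hDdef]; ring
    rw [key]
    calc |(S - f1 m) - (a (m - d) - a m + a1 m * d)|
        = |(S - f1 m) + -(a (m - d) - a m + a1 m * d)| := by rw [sub_eq_add_neg]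
      _ ≤ |S - f1 m| + |-(a (m - d) - a m + a1 m * d)| := abs_add_le _ _
      _ = |S - f1 m| + |a (m - d) - a m + a1 m * d| := by rw [abs_neg]
      _ ≤ Kf3 * d ^ 2 + Ka2 * d ^ 2 := add_le_add E2 E3
      _ = c2 * d ^ 2 := by simp only [hc2def]; ring
  set e1 : ℝ := a (m - d) - a (m + d) + 2 * a1 m * d with he1def
  have he1 : |e1| ≤ c1 * |d| ^ 3 := E1
  set q : ℝ := (a (m - d) - a (m + d)) / Sm with hqdef
  have hq1 : 1 + q = Sp / Sm := by
    have hkey : Sm + (a (m - d) - a (m + d)) = Sp := by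
      simp only [hSmdef, hSpdef]; ring
    rw [hqdef, ← hkey]
    field_simp
  have hqabs : |q| ≤ 2 * Ka1 / δ * |d| := by
    have hnum : |a (m - d) - a (m + d)| ≤ Ka1 * (2 * |d|) := by
      have hl := hLa (m - d) hmdI (m + d) hpdI
      have hee : (m - d) - (m + d) = -(2 * d) := by ring
      rw [hee, abs_neg, abs_mul] at hl
      have h2 : |(2:ℝ)| = 2 := by norm_num
      rw [h2] at hl
      exact hl
    rw [hqdef, abs_div, abs_of_pos hSmpos]
    calc |a (m - d) - a (m + d)| / Sm ≤ (Ka1 * (2 * |d|)) / δ :=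
        div_le_div₀ (by positivity) hnum hδ hSm
      _ = 2 * Ka1 / δ * |d| := by ring
  set X : ℝ := -(2 * a1 m * d) / D + 2 * (a1 m) ^ 2 * d ^ 2 / D ^ 2 with hXdef
  have hqX : |q - X| ≤ CA * |d| ^ 3 := by
    have hiden : q - X = (e1 * D ^ 2 + 2 * a1 m * d * D * e - 2 * (a1 m) ^ 3 * d ^ 3
        - 2 * (a1 m) ^ 2 * d ^ 2 * e) / (Sm * D ^ 2) := by
      rw [hqdef, hXdef, he1def, hedef]
      field_simp
      ring
    rw [hiden, abs_div]
    have hden : δ ^ 3 ≤ |Sm * D ^ 2| := by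
      rw [abs_of_pos (by positivity)]
      calc δ ^ 3 = δ * δ ^ 2 := by ring
        _ ≤ Sm * D ^ 2 :=
          mul_le_mul hSm (pow_le_pow_left₀ hδ.le hD 2) (by positivity) (by linarith only [hSm, hδ])
    have t1 : |e1 * D ^ 2| ≤ c1 * KD ^ 2 * |d| ^ 3 := by
      rw [abs_mul, abs_pow]
      calc |e1| * |D| ^ 2 ≤ c1 * |d| ^ 3 * KD ^ 2 :=
          mul_le_mul he1 (pow_le_pow_left₀ (abs_nonneg D) hDabs 2)
            (by positivity) (mul_nonneg hc1p (by positivity))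
        _ = c1 * KD ^ 2 * |d| ^ 3 := by ring
    have t2 : |2 * a1 m * d * D * e| ≤ 2 * Ka1 * KD * c2 * |d| ^ 3 := by
      have h2' : |2 * a1 m * d * D * e| = |a1 m| * |d| * |D| * |e| * 2 := by
        simp only [abs_mul]
        have h2 : |(2:ℝ)| = 2 := by norm_num
        rw [h2]; ring
      rw [h2']
      have step1 : |a1 m| * |d| ≤ Ka1 * |d| := mul_le_mul_of_nonneg_right habs1 hAd0
      have step2 : |a1 m| * |d| * |D| ≤ Ka1 * |d| * KD :=
        mul_le_mul step1 hDabs (abs_nonneg D) (mul_nonneg hKa1p hAd0)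
      have step3 : |a1 m| * |d| * |D| * |e| ≤ Ka1 * |d| * KD * (c2 * d ^ 2) :=
        mul_le_mul step2 he (abs_nonneg e)
          (mul_nonneg (mul_nonneg hKa1p hAd0) hKDp)
      calc |a1 m| * |d| * |D| * |e| * 2 ≤ Ka1 * |d| * KD * (c2 * d ^ 2) * 2 := by linarith only [step3]
        _ = 2 * Ka1 * KD * c2 * |d| ^ 3 := by rw [hd2]; ring
    have t3 : |2 * (a1 m) ^ 3 * d ^ 3| ≤ 2 * Ka1 ^ 3 * |d| ^ 3 := by
      have h2' : |2 * (a1 m) ^ 3 * d ^ 3| = |a1 m| ^ 3 * |d| ^ 3 * 2 := by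
        simp only [abs_mul, abs_pow]
        have h2 : |(2:ℝ)| = 2 := by norm_num
        rw [h2]; ring
      rw [h2']
      have step : |a1 m| ^ 3 ≤ Ka1 ^ 3 := pow_le_pow_left₀ (abs_nonneg _) habs1 3
      have := mul_le_mul_of_nonneg_right step (pow_nonneg hAd0 3)
      linarith only [this]
    have t4 : |2 * (a1 m) ^ 2 * d ^ 2 * e| ≤ 2 * Ka1 ^ 2 * c2 * M * |d| ^ 3 := by
      have h2' : |2 * (a1 m) ^ 2 * d ^ 2 * e| = |a1 m| ^ 2 * |d| ^ 2 * |e| * 2 := by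
        simp only [abs_mul, abs_pow, abs_sq]
        have h2 : |(2:ℝ)| = 2 := by norm_num
        rw [h2]; ring
      rw [h2']
      have step1 : |a1 m| ^ 2 * |d| ^ 2 ≤ Ka1 ^ 2 * |d| ^ 2 :=
        mul_le_mul_of_nonneg_right (pow_le_pow_left₀ (abs_nonneg _) habs1 2) (by positivity)
      have step2 : |a1 m| ^ 2 * |d| ^ 2 * |e| ≤ Ka1 ^ 2 * |d| ^ 2 * (c2 * d ^ 2) :=
        mul_le_mul step1 he (abs_nonneg e)
          (mul_nonneg (sq_nonneg Ka1) (by positivity))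
      calc |a1 m| ^ 2 * |d| ^ 2 * |e| * 2 ≤ Ka1 ^ 2 * |d| ^ 2 * (c2 * d ^ 2) * 2 := by
            linarith only [step2]
        _ = 2 * Ka1 ^ 2 * c2 * (|d| ^ 3 * |d|) := by rw [hd2]; ring
        _ ≤ 2 * Ka1 ^ 2 * c2 * (|d| ^ 3 * M) := by
            apply mul_le_mul_of_nonneg_left
              (mul_le_mul_of_nonneg_left hdM (by positivity))
            exact mul_nonneg (mul_nonneg (by norm_num) (sq_nonneg _)) hc2p
        _ = 2 * Ka1 ^ 2 * c2 * M * |d| ^ 3 := by ring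
    have tri : ∀ w x y z : ℝ, |w + x - y - z| ≤ |w| + |x| + |y| + |z| := by
      intro w x y z
      have g1 : w + x - y - z = (w + x - y) + -z := by ring
      have g2 : w + x - y = (w + x) + -y := by ring
      calc |w + x - y - z| = |(w + x - y) + -z| := by rw [g1]
        _ ≤ |w + x - y| + |-z| := abs_add_le _ _
        _ = |(w + x) + -y| + |z| := by rw [g2, abs_neg]
        _ ≤ |w + x| + |-y| + |z| := by linarith only [abs_add_le (w + x) (-y)]
        _ ≤ |w| + |x| + |y| + |z| := by
            rw [abs_neg]; linarith only [abs_add_le w x]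
    have hNum : |e1 * D ^ 2 + 2 * a1 m * d * D * e - 2 * (a1 m) ^ 3 * d ^ 3
        - 2 * (a1 m) ^ 2 * d ^ 2 * e|
        ≤ (c1 * KD ^ 2 + 2 * Ka1 * KD * c2 + 2 * Ka1 ^ 3 + 2 * Ka1 ^ 2 * c2 * M)
          * |d| ^ 3 := by
      have := tri (e1 * D ^ 2) (2 * a1 m * d * D * e) (2 * (a1 m) ^ 3 * d ^ 3)
        (2 * (a1 m) ^ 2 * d ^ 2 * e)
      calc |e1 * D ^ 2 + 2 * a1 m * d * D * e - 2 * (a1 m) ^ 3 * d ^ 3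
          - 2 * (a1 m) ^ 2 * d ^ 2 * e|
          ≤ |e1 * D ^ 2| + |2 * a1 m * d * D * e| + |2 * (a1 m) ^ 3 * d ^ 3|
            + |2 * (a1 m) ^ 2 * d ^ 2 * e| := this
        _ ≤ c1 * KD ^ 2 * |d| ^ 3 + 2 * Ka1 * KD * c2 * |d| ^ 3 + 2 * Ka1 ^ 3 * |d| ^ 3
            + 2 * Ka1 ^ 2 * c2 * M * |d| ^ 3 := by linarith only [t1, t2, t3, t4]
        _ = (c1 * KD ^ 2 + 2 * Ka1 * KD * c2 + 2 * Ka1 ^ 3 + 2 * Ka1 ^ 2 * c2 * M)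
            * |d| ^ 3 := by ring
    calc |e1 * D ^ 2 + 2 * a1 m * d * D * e - 2 * (a1 m) ^ 3 * d ^ 3
        - 2 * (a1 m) ^ 2 * d ^ 2 * e| / |Sm * D ^ 2|
        ≤ ((c1 * KD ^ 2 + 2 * Ka1 * KD * c2 + 2 * Ka1 ^ 3 + 2 * Ka1 ^ 2 * c2 * M)
            * |d| ^ 3) / δ ^ 3 :=
          div_le_div₀ (le_trans (abs_nonneg _) hNum) hNum (by positivity) hden
      _ = CA * |d| ^ 3 := by simp only [hCAdef]; ring
  -- Claim B
  set w : ℝ := q + 2 * a1 m * d / D with hwdef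
  have hw : |w| ≤ cw * |d| ^ 2 := by
    have hkey : w = (q - X) + 2 * (a1 m) ^ 2 * d ^ 2 / D ^ 2 := by
      rw [hwdef, hXdef]; ring
    have hsecond : |2 * (a1 m) ^ 2 * d ^ 2 / D ^ 2| ≤ 2 * Ka1 ^ 2 / δ ^ 2 * |d| ^ 2 := by
      rw [abs_div, abs_pow]
      have hn : |2 * (a1 m) ^ 2 * d ^ 2| ≤ 2 * Ka1 ^ 2 * |d| ^ 2 := by
        have h2' : |2 * (a1 m) ^ 2 * d ^ 2| = |a1 m| ^ 2 * |d| ^ 2 * 2 := by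
          simp only [abs_mul, abs_pow]
          have h2 : |(2:ℝ)| = 2 := by norm_num
          rw [h2]; ring
        rw [h2']
        have step : |a1 m| ^ 2 ≤ Ka1 ^ 2 := pow_le_pow_left₀ (abs_nonneg _) habs1 2
        linarith only [mul_le_mul_of_nonneg_right step (pow_nonneg hAd0 2)]
      have hdd : δ ^ 2 ≤ |D| ^ 2 := by
        apply pow_le_pow_left₀ hδ.le
        rw [abs_of_pos hDpos]; exact hD
      calc |2 * (a1 m) ^ 2 * d ^ 2| / |D| ^ 2 ≤ (2 * Ka1 ^ 2 * |d| ^ 2) / δ ^ 2 :=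
          div_le_div₀ (by positivity) hn (by positivity) hdd
        _ = 2 * Ka1 ^ 2 / δ ^ 2 * |d| ^ 2 := by ring
    have hfirst : |q - X| ≤ CA * M * |d| ^ 2 := by
      calc |q - X| ≤ CA * |d| ^ 3 := hqX
        _ = CA * |d| * |d| ^ 2 := by ring
        _ ≤ CA * M * |d| ^ 2 := by
            apply mul_le_mul_of_nonneg_right _ (by positivity)
            exact mul_le_mul_of_nonneg_left hdM hCAp
    calc |w| = |(q - X) + 2 * (a1 m) ^ 2 * d ^ 2 / D ^ 2| := by rw [hkey]
      _ ≤ |q - X| + |2 * (a1 m) ^ 2 * d ^ 2 / D ^ 2| := abs_add_le _ _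
      _ ≤ CA * M * |d| ^ 2 + 2 * Ka1 ^ 2 / δ ^ 2 * |d| ^ 2 := add_le_add hfirst hsecond
      _ = cw * |d| ^ 2 := by simp only [hcwdef]; ring
  have halpha : |2 * a1 m * d / D| ≤ 2 * Ka1 / δ * |d| := by
    rw [abs_div]
    have hn : |2 * a1 m * d| ≤ 2 * Ka1 * |d| := by
      have h2' : |2 * a1 m * d| = |a1 m| * |d| * 2 := by
        simp only [abs_mul]
        have h2 : |(2:ℝ)| = 2 := by norm_num
        rw [h2]; ring
      rw [h2']
      linarith only [mul_le_mul_of_nonneg_right habs1 hAd0]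
    have hdd : δ ≤ |D| := by rw [abs_of_pos hDpos]; exact hD
    calc |2 * a1 m * d| / |D| ≤ (2 * Ka1 * |d|) / δ :=
        div_le_div₀ (by positivity) hn hδ hdd
      _ = 2 * Ka1 / δ * |d| := by ring
  have hq2 : |q ^ 2 / 2 - 2 * (a1 m) ^ 2 * d ^ 2 / D ^ 2| ≤ CB * |d| ^ 3 := by
    have hkey : q ^ 2 / 2 - 2 * (a1 m) ^ 2 * d ^ 2 / D ^ 2
        = -(2 * a1 m * d / D) * w + w ^ 2 / 2 := by
      have hq' : q = -(2 * a1 m * d / D) + w := by rw [hwdef]; ring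
      rw [hq']
      field_simp
      ring
    rw [hkey]
    have t1 : |-(2 * a1 m * d / D) * w| ≤ 2 * Ka1 * cw / δ * |d| ^ 3 := by
      rw [abs_mul, abs_neg]
      calc |2 * a1 m * d / D| * |w| ≤ (2 * Ka1 / δ * |d|) * (cw * |d| ^ 2) :=
          mul_le_mul halpha hw (abs_nonneg w)
            (mul_nonneg (div_nonneg (by linarith only [hKa1p]) hδ.le) hAd0)
        _ = 2 * Ka1 * cw / δ * |d| ^ 3 := by ring
    have t2 : |w ^ 2 / 2| ≤ cw ^ 2 * M / 2 * |d| ^ 3 := by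
      rw [abs_div, abs_pow]
      have h2 : |(2:ℝ)| = 2 := by norm_num
      rw [h2]
      have step : |w| ^ 2 ≤ (cw * |d| ^ 2) ^ 2 := pow_le_pow_left₀ (abs_nonneg w) hw 2
      have hd4 : |d| ^ 4 ≤ M * |d| ^ 3 := by
        have : |d| ^ 4 = |d| * |d| ^ 3 := by ring
        rw [this]
        exact mul_le_mul_of_nonneg_right hdM (by positivity)
      have hcw2 : (cw * |d| ^ 2) ^ 2 = cw ^ 2 * |d| ^ 4 := by ring
      rw [div_le_iff₀ (by norm_num : (0:ℝ) < 2)]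
      calc |w| ^ 2 ≤ cw ^ 2 * |d| ^ 4 := by rw [← hcw2]; exact step
        _ ≤ cw ^ 2 * (M * |d| ^ 3) := mul_le_mul_of_nonneg_left hd4 (sq_nonneg cw)
        _ = cw ^ 2 * M / 2 * |d| ^ 3 * 2 := by ring
    calc |-(2 * a1 m * d / D) * w + w ^ 2 / 2|
        ≤ |-(2 * a1 m * d / D) * w| + |w ^ 2 / 2| := abs_add_le _ _
      _ ≤ 2 * Ka1 * cw / δ * |d| ^ 3 + cw ^ 2 * M / 2 * |d| ^ 3 := add_le_add t1 t2
      _ = CB * |d| ^ 3 := by simp only [hCBdef]; ring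
  -- representation of rFun and global bound
  have hrw : rFun f a A (um, up) = Sp / Sm * Real.exp (A (m - d) - A (m + d)) := by
    simp only [rFun, hSpdef, hSmdef, hSdef]
    rw [e1', e2']
  have hfar : |rFun f a A (um, up) - 1| ≤ B := by
    have hrpos : 0 < Sp / Sm * Real.exp (A (m - d) - A (m + d)) :=
      mul_pos (div_pos hSppos hSmpos) (Real.exp_pos _)
    have hAm : |A (m - d)| ≤ KA := by simpa using hKA _ hmdI
    have hAp : |A (m + d)| ≤ KA := by simpa using hKA _ hpdI
    have hexp : Real.exp (A (m - d) - A (m + d)) ≤ Real.exp (2 * KA) := by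
      apply Real.exp_le_exp.mpr
      linarith only [(abs_le.mp hAm).2, (abs_le.mp hAp).1]
    have hSpb : Sp ≤ Kf1 + Ka0 := by
      have h2 : |a (m + d)| ≤ Ka0 := by simpa using hKa0 _ hpdI
      simp only [hSpdef]
      linarith only [(abs_le.mp hSabs).2, (abs_le.mp h2).1]
    have hdivb : Sp / Sm ≤ (Kf1 + Ka0) / δ :=
      div_le_div₀ (by linarith only [hKf1p, hKa0p]) hSpb hδ hSm
    have hrb : Sp / Sm * Real.exp (A (m - d) - A (m + d))
        ≤ (Kf1 + Ka0) / δ * Real.exp (2 * KA) :=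
      mul_le_mul hdivb hexp (Real.exp_pos _).le
        (div_nonneg (by linarith only [hKf1p, hKa0p]) hδ.le)
    have hB0 : 0 ≤ (Kf1 + Ka0) / δ * Real.exp (2 * KA) :=
      mul_nonneg (div_nonneg (by linarith only [hKf1p, hKa0p]) hδ.le) (Real.exp_pos _).le
    rw [hrw]
    apply abs_le.mpr
    constructor
    · simp only [hBdef]; linarith only [hrpos, hB0]
    · simp only [hBdef]; linarith only [hrb]
  have hdle : |d| ≤ |up - um| := by
    have h1 : |d| = |up - um| / 2 := by rw [hddef, abs_div]; norm_num
    linarith only [h1, abs_nonneg (up - um)]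
  have hd3 : |d| ^ 3 ≤ |up - um| ^ 3 := pow_le_pow_left₀ hAd0 hdle 3
  have hup3 : (0:ℝ) ≤ |up - um| ^ 3 := by positivity
  have main1 : |rFun f a A (um, up) - 1| ≤ Cfin * |up - um| ^ 3 := by
    by_cases hnear : |d| ≤ d₀ ∧ Cφ * |d| ^ 3 ≤ 1
    · obtain ⟨hd₀le, hφ1⟩ := hnear
      have hqd : |q| ≤ 2 * Ka1 / δ * d₀ := by
        calc |q| ≤ 2 * Ka1 / δ * |d| := hqabs
          _ ≤ 2 * Ka1 / δ * d₀ := mul_le_mul_of_nonneg_left hd₀le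
              (div_nonneg (by linarith only [hKa1p]) hδ.le)
      have hqval : 2 * Ka1 / δ * d₀ ≤ 1 / 4 := by
        rw [hd₀def]
        have hne : δ ≠ 0 := ne_of_gt hδ
        have hpos8 : (0:ℝ) < 8 * (Ka1 + 1) := by linarith only [hKa1p]
        have hkey : 2 * Ka1 / δ * (δ / (8 * (Ka1 + 1))) = Ka1 / (4 * (Ka1 + 1)) := by
          field_simp
          ring
        rw [hkey, div_le_iff₀ (by linarith only [hKa1p] : (0:ℝ) < 4 * (Ka1 + 1))]
        linarith only [hKa1p]
      have hqq : |q| ≤ 1 / 4 := le_trans hqd hqval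
      have hlog : |Real.log (1 + q) - (q - q ^ 2 / 2)| ≤ 2 * |q| ^ 3 := by
        have h1 : |(-q)| < 1 := by rw [abs_neg]; linarith only [hqq]
        have hest := Real.abs_log_sub_add_sum_range_le h1 2
        have hsum : (∑ i ∈ Finset.range 2, (-q) ^ (i + 1) / (i + 1)) = -q + q ^ 2 / 2 := by
          norm_num [Finset.sum_range_succ]
        rw [hsum] at hest
        have hone : (1:ℝ) - -q = 1 + q := by ring
        rw [hone] at hest
        have hrewrite : |(-q + q ^ 2 / 2) + Real.log (1 + q)|
            = |Real.log (1 + q) - (q - q ^ 2 / 2)| := by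
          congr 1
          ring
        rw [hrewrite] at hest
        calc |Real.log (1 + q) - (q - q ^ 2 / 2)| ≤ |(-q)| ^ 3 / (1 - |(-q)|) := hest
          _ ≤ 2 * |q| ^ 3 := by
            rw [abs_neg, div_le_iff₀ (by linarith only [hqq] : (0:ℝ) < 1 - |q|)]
            have h3 : (1:ℝ) ≤ 2 * (1 - |q|) := by linarith only [hqq]
            calc |q| ^ 3 = |q| ^ 3 * 1 := by ring
              _ ≤ |q| ^ 3 * (2 * (1 - |q|)) :=
                mul_le_mul_of_nonneg_left h3 (pow_nonneg (abs_nonneg q) 3)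
              _ = 2 * |q| ^ 3 * (1 - |q|) := by ring
      have hT4 : |(A (m - d) - A (m + d)) - 2 * a1 m * d / D| ≤ 2 * Kψ2 * |d| ^ 3 := by
        have hψm : ψ m = -(a1 m / D) := by
          show a1 m / (a m - f1 m) = -(a1 m / D)
          have hden2 : a m - f1 m = -D := by simp only [hDdef]; ring
          rw [hden2, div_neg]
        have hkey : (A (m - d) - A (m + d)) - 2 * a1 m * d / D
            = -(A (m + d) - A (m - d) - 2 * ψ m * d) := by
          rw [hψm]; ring
        rw [hkey, abs_neg]
        exact E4
      have hq3 : 2 * |q| ^ 3 ≤ clog * |d| ^ 3 := by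
        have hpows := pow_le_pow_left₀ (abs_nonneg q) hqabs 3
        have heq : (2 * Ka1 / δ * |d|) ^ 3 = (2 * Ka1 / δ) ^ 3 * |d| ^ 3 := by ring
        rw [heq] at hpows
        simp only [hclogdef]
        linarith only [hpows]
      have habc : ∀ x y z w : ℝ, |x + y - z + w| ≤ |x| + |y| + |z| + |w| := by
        intro x y z w
        have g1 : x + y - z + w = ((x + y) + -z) + w := by ring
        rw [g1]
        calc |((x + y) + -z) + w| ≤ |(x + y) + -z| + |w| := abs_add_le _ _
          _ ≤ |x + y| + |-z| + |w| := by linarith only [abs_add_le (x + y) (-z)]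
          _ ≤ |x| + |y| + |z| + |w| := by rw [abs_neg]; linarith only [abs_add_le x y]
      set φv : ℝ := Real.log (Sp / Sm) + (A (m - d) - A (m + d)) with hφdef
      have hφ : |φv| ≤ Cφ * |d| ^ 3 := by
        have hlq : Real.log (Sp / Sm) = Real.log (1 + q) := by rw [← hq1]
        have hdecomp : φv = (Real.log (1 + q) - (q - q ^ 2 / 2)) + (q - X)
            - (q ^ 2 / 2 - 2 * (a1 m) ^ 2 * d ^ 2 / D ^ 2)
            + ((A (m - d) - A (m + d)) - 2 * a1 m * d / D) := by
          rw [hφdef, hlq, hXdef]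
          ring
        rw [hdecomp]
        calc |(Real.log (1 + q) - (q - q ^ 2 / 2)) + (q - X)
            - (q ^ 2 / 2 - 2 * (a1 m) ^ 2 * d ^ 2 / D ^ 2)
            + ((A (m - d) - A (m + d)) - 2 * a1 m * d / D)|
            ≤ |Real.log (1 + q) - (q - q ^ 2 / 2)| + |q - X|
              + |q ^ 2 / 2 - 2 * (a1 m) ^ 2 * d ^ 2 / D ^ 2|
              + |(A (m - d) - A (m + d)) - 2 * a1 m * d / D| := habc _ _ _ _
          _ ≤ clog * |d| ^ 3 + CA * |d| ^ 3 + CB * |d| ^ 3 + 2 * Kψ2 * |d| ^ 3 := by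
              linarith only [hlog, hqX, hq2, hT4, hq3]
          _ = Cφ * |d| ^ 3 := by simp only [hCφdef]; ring
      have hrφ : rFun f a A (um, up) = Real.exp φv := by
        rw [hrw, hφdef, Real.exp_add, Real.exp_log (div_pos hSppos hSmpos)]
      rw [hrφ]
      have hexp1 : |Real.exp φv - 1| ≤ 2 * |φv| := by
        apply Real.abs_exp_sub_one_le
        calc |φv| ≤ Cφ * |d| ^ 3 := hφ
          _ ≤ 1 := hφ1
      calc |Real.exp φv - 1| ≤ 2 * |φv| := hexp1
        _ ≤ 2 * Cφ * |d| ^ 3 := by linarith only [hφ]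
        _ ≤ 2 * Cφ * |up - um| ^ 3 :=
            mul_le_mul_of_nonneg_left hd3 (by linarith only [hCφp])
        _ ≤ Cfin * |up - um| ^ 3 := by
            apply mul_le_mul_of_nonneg_right _ hup3
            clear_value B Cφ d₀ Cfin
            simp only [hCfindef]
            linarith only [mul_nonneg hBp.le hCφp,
              div_nonneg hBp.le (pow_nonneg hd₀.le 3)]
    · push_neg at hnear
      by_cases hdd : d₀ < |d|
      · have hstep : B ≤ B / d₀ ^ 3 * |d| ^ 3 := by
          have h3 : d₀ ^ 3 ≤ |d| ^ 3 := pow_le_pow_left₀ hd₀.le hdd.le 3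
          rw [div_mul_eq_mul_div, le_div_iff₀ (pow_pos hd₀ 3)]
          exact mul_le_mul_of_nonneg_left h3 hBp.le
        calc |rFun f a A (um, up) - 1| ≤ B := hfar
          _ ≤ B / d₀ ^ 3 * |d| ^ 3 := hstep
          _ ≤ B / d₀ ^ 3 * |up - um| ^ 3 :=
              mul_le_mul_of_nonneg_left hd3 (div_nonneg hBp.le (pow_nonneg hd₀.le 3))
          _ ≤ Cfin * |up - um| ^ 3 := by
              apply mul_le_mul_of_nonneg_right _ hup3
              clear_value B Cφ d₀ Cfin
              simp only [hCfindef]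
              linarith only [hCφp, mul_nonneg hBp.le hCφp]
      · push_neg at hdd
        have h1 : 1 < Cφ * |d| ^ 3 := hnear hdd
        calc |rFun f a A (um, up) - 1| ≤ B := hfar
          _ ≤ B * (Cφ * |d| ^ 3) := le_mul_of_one_le_right hBp.le h1.le
          _ = B * Cφ * |d| ^ 3 := by ring
          _ ≤ B * Cφ * |up - um| ^ 3 :=
              mul_le_mul_of_nonneg_left hd3 (mul_nonneg hBp.le hCφp)
          _ ≤ Cfin * |up - um| ^ 3 := by
              apply mul_le_mul_of_nonneg_right _ hup3
              clear_value B Cφ d₀ Cfin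
              simp only [hCfindef]
              linarith only [hCφp, div_nonneg hBp.le (pow_nonneg hd₀.le 3)]
  refine ⟨main1, ?_⟩
  intro Zp
  have hfac : Zp * rFun f a A (um, up) - Zp = Zp * (rFun f a A (um, up) - 1) := by ring
  rw [hfac, abs_mul]
  calc |Zp| * |rFun f a A (um, up) - 1| ≤ |Zp| * (Cfin * |up - um| ^ 3) :=
      mul_le_mul_of_nonneg_left main1 (abs_nonneg Zp)
    _ = Cfin * |Zp| * |up - um| ^ 3 := by ring
end

section
/- Let M > 0, f ∈ C⁴([−M,M]), a ∈ C³([−M,M]), and suppose the uniform strict hyperbolicity condition inf_{|u|≤M} f'(u) > sup_{|u|≤M} a(u) holds. Then there exists a constant C > 0, depending only on f, a and M, with the following property. Let m ≥ 1, let u₀ < u₁ < … < u_m be points of [−M,M], and let Z₀, Z₁, …, Z_m ∈ ℝ satisfy, for each i ∈ {1,…,m}, either Z_{i−1} = Z_i or Z_{i−1} = Z_i · r(u_{i−1},u_i). Then max_{0≤i≤m} |Z_i| ≤ |Z_m| · exp(C (u_m − u₀)³) and Σ_{i=1}^m |Z_i − Z_{i−1}| ≤ C |Z_m| (u_m − u₀)³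 · exp(C (u_m − u₀)³). -/
open Real Set

private lemma abs_exp_sub_one_le (x : ℝ) : |Real.exp x - 1| ≤ |x| * Real.exp |x| := by
  rcases le_or_gt 0 x with hx | hx
  · have hmul : Real.exp (-x) * Real.exp x = 1 := by rw [← Real.exp_add]; simp
    rw [abs_of_nonneg hx, abs_of_nonneg (by linarith [Real.one_le_exp hx] : (0:ℝ) ≤ Real.exp x - 1)]
    nlinarith [Real.add_one_le_exp (-x), Real.exp_pos x, Real.exp_pos (-x)]
  · have hle : Real.exp x ≤ 1 := by
      rw [← Real.exp_zero]; exact Real.exp_le_exp.2 hx.le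
    rw [abs_of_neg hx, abs_of_nonpos (by linarith : Real.exp x - 1 ≤ 0)]
    nlinarith [Real.add_one_le_exp x, Real.one_le_exp (by linarith : (0:ℝ) ≤ -x)]

private lemma sum_pow_three_le {m : ℕ} (d : Fin m → ℝ) (hd : ∀ i, 0 ≤ d i) :
    ∑ i, d i ^ 3 ≤ (∑ i, d i) ^ 3 := by
  classical
  induction m with
  | zero => simp
  | succ n ih =>
    rw [Fin.sum_univ_succ (fun i => d i ^ 3), Fin.sum_univ_succ d]
    have h1 := ih (fun i => d i.succ) (fun i => hd i.succ)
    set S := ∑ i : Fin n, d i.succ with hS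
    have h2 : 0 ≤ S := Finset.sum_nonneg fun i _ => hd i.succ
    have h0 := hd 0
    nlinarith [mul_nonneg (mul_nonneg h0 h0) h2, mul_nonneg (mul_nonneg h0 h2) h2,
      pow_nonneg h2 3]

private lemma telescope_fin {m : ℕ} (u : Fin (m+1) → ℝ) :
    ∑ i : Fin m, (u i.succ - u i.castSucc) = u (Fin.last m) - u 0 := by
  classical
  set w : ℕ → ℝ := fun n => u ⟨min n m, Nat.lt_succ_of_le (min_le_right n m)⟩ with hw
  have h1 : ∀ i : Fin m, u i.succ - u i.castSucc = w ((i : ℕ) + 1) - w (i : ℕ) := by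
    rintro ⟨iv, hi⟩
    have e1 : w (iv + 1) = u (Fin.succ ⟨iv, hi⟩) := by
      have h : min (iv + 1) m = iv + 1 := Nat.min_eq_left (by omega)
      apply congrArg u
      exact Fin.ext (by simp [Fin.val_succ, h])
    have e2 : w iv = u (Fin.castSucc ⟨iv, hi⟩) := by
      have h : min iv m = iv := Nat.min_eq_left (by omega)
      apply congrArg u
      exact Fin.ext (by simp [Fin.coe_castSucc, h])
    rw [e1, e2]
  calc ∑ i : Fin m, (u i.succ - u i.castSucc) = ∑ i : Fin m, (w ((i : ℕ) + 1) - w (i : ℕ)) := by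
        exact Finset.sum_congr rfl fun i _ => h1 i
    _ = ∑ i ∈ Finset.range m, (w (i + 1) - w i) :=
        Fin.sum_univ_eq_sum_range (fun n => w (n+1) - w n) m
    _ = w m - w 0 := Finset.sum_range_sub w m
    _ = u (Fin.last m) - u 0 := by
        have e1 : w m = u (Fin.last m) := congrArg u (Fin.ext (by simp [Fin.val_last]))
        have e2 : w 0 = u 0 := congrArg u (Fin.ext (by simp))
        rw [e1, e2]

set_option maxHeartbeats 2000000 in
/-- Key analytic estimate: the amplification factor is `1 + O((u₊-u₋)³)`. -/
private lemma rFun_cubic (M : ℝ) (hM : 0 < M) (f a A : ℝ → ℝ)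
    (hf : ContDiff ℝ 4 f) (ha : ContDiff ℝ 3 a)
    (hUSH : sSup (a '' Icc (-M) M) < sInf (deriv f '' Icc (-M) M))
    (hA : ∀ ξ ∈ Icc (-M) M, HasDerivAt A (deriv a ξ / (a ξ - deriv f ξ)) ξ) :
    ∃ C : ℝ, 0 < C ∧ ∀ v w, v ∈ Icc (-M) M → w ∈ Icc (-M) M → v < w →
      |rFun f a A (v, w) - 1| ≤ C * (w - v) ^ 3 := by
  set K := Icc (-M) M with hK
  have hKc : IsCompact K := isCompact_Icc
  have h0K : (0:ℝ) ∈ K := ⟨by linarith, by linarith⟩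
  -- differentiability/continuity facts
  have hf1 : Differentiable ℝ f := hf.differentiable (by norm_num)
  have hfd : ContDiff ℝ 3 (deriv f) := by
    have h4 : ContDiff ℝ ((3:ℕ)+1) f := by exact_mod_cast hf
    exact_mod_cast (contDiff_succ_iff_deriv.mp h4).2.2
  have hfc' : Continuous (deriv f) := hfd.continuous
  have hf2 : Differentiable ℝ (deriv f) := hfd.differentiable (by norm_num)
  have hfc'' : Continuous (deriv (deriv f)) := by
    have h3 : ContDiff ℝ ((2:ℕ)+1) (deriv f) := by exact_mod_cast hfd
    exact_mod_cast ((contDiff_succ_iff_deriv.mp h3).2.2).continuous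
  have ha1 : Differentiable ℝ a := ha.differentiable (by norm_num)
  have hac : Continuous a := ha.continuous
  have had : ContDiff ℝ 2 (deriv a) := by
    have h3 : ContDiff ℝ ((2:ℕ)+1) a := by exact_mod_cast ha
    exact_mod_cast (contDiff_succ_iff_deriv.mp h3).2.2
  have hac' : Continuous (deriv a) := had.continuous
  have ha2 : Differentiable ℝ (deriv a) := had.differentiable (by norm_num)
  have hac'' : Continuous (deriv (deriv a)) := by
    have h2 : ContDiff ℝ ((1:ℕ)+1) (deriv a) := by exact_mod_cast had
    exact_mod_cast ((contDiff_succ_iff_deriv.mp h2).2.2).continuous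
  -- bounds on K
  obtain ⟨Ba, hBa⟩ := hKc.exists_bound_of_continuousOn hac.continuousOn
  obtain ⟨Ba1, hBa1⟩ := hKc.exists_bound_of_continuousOn hac'.continuousOn
  obtain ⟨Ba2, hBa2⟩ := hKc.exists_bound_of_continuousOn hac''.continuousOn
  obtain ⟨Bf1, hBf1⟩ := hKc.exists_bound_of_continuousOn hfc'.continuousOn
  obtain ⟨Bf2, hBf2⟩ := hKc.exists_bound_of_continuousOn hfc''.continuousOn
  have hBa0 : 0 ≤ Ba := le_trans (norm_nonneg _) (hBa _ h0K)
  have hBa10 : 0 ≤ Ba1 := le_trans (norm_nonneg _) (hBa1 _ h0K)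
  have hBa20 : 0 ≤ Ba2 := le_trans (norm_nonneg _) (hBa2 _ h0K)
  have hBf10 : 0 ≤ Bf1 := le_trans (norm_nonneg _) (hBf1 _ h0K)
  have hBf20 : 0 ≤ Bf2 := le_trans (norm_nonneg _) (hBf2 _ h0K)
  -- hyperbolicity gap
  set δ0 : ℝ := sInf (deriv f '' K) - sSup (a '' K) with hδ0def
  have hδ0 : 0 < δ0 := sub_pos.2 hUSH
  have haSup : ∀ x ∈ K, a x ≤ sSup (a '' K) := fun x hx =>
    le_csSup (hKc.image hac).bddAbove ⟨x, hx, rfl⟩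
  have hfInf : ∀ x ∈ K, sInf (deriv f '' K) ≤ deriv f x := fun x hx =>
    csInf_le (hKc.image hfc').bddBelow ⟨x, hx, rfl⟩
  have hgap : ∀ x ∈ K, δ0 ≤ deriv f x - a x := by
    intro x hx; have := haSup x hx; have := hfInf x hx; rw [hδ0def]; linarith
  -- Lipschitz estimates on K
  have lipa : ∀ x ∈ K, ∀ y ∈ K, |a y - a x| ≤ Ba1 * |y - x| := by
    intro x hx y hy
    simpa [Real.norm_eq_abs] using
      (convex_Icc (-M) M).norm_image_sub_le_of_norm_deriv_le
        (fun z _ => ha1.differentiableAt) hBa1 hx hy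
  have lipa' : ∀ x ∈ K, ∀ y ∈ K, |deriv a y - deriv a x| ≤ Ba2 * |y - x| := by
    intro x hx y hy
    simpa [Real.norm_eq_abs] using
      (convex_Icc (-M) M).norm_image_sub_le_of_norm_deriv_le
        (fun z _ => ha2.differentiableAt) hBa2 hx hy
  have lipf' : ∀ x ∈ K, ∀ y ∈ K, |deriv f y - deriv f x| ≤ Bf2 * |y - x| := by
    intro x hx y hy
    simpa [Real.norm_eq_abs] using
      (convex_Icc (-M) M).norm_image_sub_le_of_norm_deriv_le
        (fun z _ => hf2.differentiableAt) hBf2 hx hy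
  -- constants
  set E : ℝ := Bf1 + Ba with hE
  set LD : ℝ := E * Ba1 + E * (Bf2 + Ba1) with hLD
  set Lg : ℝ := (Ba2 * E^2 + Ba1 * LD) / δ0^4 with hLg
  set C₁ : ℝ := Lg * Bf2 with hC₁
  have hE0 : 0 ≤ E := by positivity
  have hLD0 : 0 ≤ LD := by positivity
  have hLg0 : 0 ≤ Lg := by positivity
  have hC₁0 : 0 ≤ C₁ := by positivity
  refine ⟨(C₁ + 1) * Real.exp ((C₁ + 1) * (2*M)^3), by positivity, ?_⟩
  intro v w hv hw hvw
  have hIK : Icc v w ⊆ K := Icc_subset_Icc hv.1 hw.2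
  have hδpos : 0 < w - v := by linarith
  have hδ2M : w - v ≤ 2*M := by
    have := hv.1; have := hw.2; linarith
  set s : ℝ := (f w - f v) / (w - v) with hs
  have hne : w - v ≠ 0 := ne_of_gt hδpos
  have hsδ : s * (w - v) = f w - f v := by rw [hs]; exact div_mul_cancel₀ _ hne
  have hFTC : ∫ x in v..w, deriv f x = f w - f v :=
    intervalIntegral.integral_deriv_eq_sub (fun x _ => hf1.differentiableAt)
      (hfc'.intervalIntegrable v w)
  have hIoc : Set.uIoc v w ⊆ Icc v w := by
    rw [Set.uIoc_of_le hvw.le]; exact Set.Ioc_subset_Icc_self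
  -- lower bound for s
  have hs_lb : sInf (deriv f '' K) ≤ s := by
    have h1 : ∫ _x in v..w, sInf (deriv f '' K) ≤ ∫ x in v..w, deriv f x := by
      apply intervalIntegral.integral_mono_on hvw.le intervalIntegrable_const
        (hfc'.intervalIntegrable v w)
      intro x hx; exact hfInf x (hIK hx)
    rw [intervalIntegral.integral_const, smul_eq_mul, hFTC] at h1
    rw [hs]; rw [le_div_iff₀ hδpos]; linarith
  have hsgap : ∀ x ∈ K, δ0 ≤ s - a x := by
    intro x hx; have := haSup x hx; rw [hδ0def]; linarith [hs_lb]
  -- upper bound |s| ≤ Bf1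
  have hs_ub : |s| ≤ Bf1 := by
    have h1 : ‖∫ x in v..w, deriv f x‖ ≤ Bf1 * |w - v| := by
      apply intervalIntegral.norm_integral_le_of_norm_le_const
      intro x hx; exact hBf1 x (hIK (hIoc hx))
    rw [hFTC, Real.norm_eq_abs, abs_of_pos hδpos] at h1
    rw [hs, abs_div, abs_of_pos hδpos, div_le_iff₀ hδpos]
    linarith
  -- |s - f'(x)| ≤ Bf2 (w-v) on [v,w]
  have hsf : ∀ x ∈ Icc v w, |s - deriv f x| ≤ Bf2 * (w - v) := by
    intro x hx
    have hint : ∫ t in v..w, (deriv f t - deriv f x) = (f w - f v) - deriv f x * (w - v) := by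
      rw [intervalIntegral.integral_sub (hfc'.intervalIntegrable v w) intervalIntegrable_const,
        hFTC, intervalIntegral.integral_const, smul_eq_mul]
      ring
    have hb : ‖∫ t in v..w, (deriv f t - deriv f x)‖ ≤ (Bf2 * (w - v)) * |w - v| := by
      apply intervalIntegral.norm_integral_le_of_norm_le_const
      intro t ht
      have htI := hIoc ht
      have h1 : |deriv f t - deriv f x| ≤ Bf2 * |t - x| := lipf' x (hIK hx) t (hIK htI)
      have h2 : |t - x| ≤ w - v := by
        rw [abs_le]; constructor <;> [linarith [htI.1, htI.2, hx.1, hx.2];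
          linarith [htI.1, htI.2, hx.1, hx.2]]
      calc ‖deriv f t - deriv f x‖ = |deriv f t - deriv f x| := rfl
        _ ≤ Bf2 * |t - x| := h1
        _ ≤ Bf2 * (w - v) := by nlinarith
    rw [hint, Real.norm_eq_abs, abs_of_pos hδpos] at hb
    have key : |s - deriv f x| * (w - v) ≤ (Bf2 * (w - v)) * (w - v) := by
      have : (s - deriv f x) * (w - v) = (f w - f v) - deriv f x * (w - v) := by
        rw [sub_mul, hsδ]
      calc |s - deriv f x| * (w - v) = |(s - deriv f x) * (w - v)| := by
            rw [abs_mul, abs_of_pos hδpos]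
        _ = |(f w - f v) - deriv f x * (w - v)| := by rw [this]
        _ ≤ (Bf2 * (w - v)) * (w - v) := hb
    exact le_of_mul_le_mul_right key hδpos
  -- the function g and its Lipschitz estimate
  set g : ℝ → ℝ := fun x => deriv a x / ((deriv f x - a x) * (s - a x)) with hg
  set D : ℝ → ℝ := fun x => (deriv f x - a x) * (s - a x) with hD
  have hDlb : ∀ x ∈ K, δ0^2 ≤ D x := by
    intro x hx
    have h1 := hgap x hx; have h2 := hsgap x hx
    have : δ0^2 = δ0 * δ0 := sq δ0
    rw [this]; exact mul_le_mul h1 h2 hδ0.le (by linarith)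
  have hDpos : ∀ x ∈ K, 0 < D x := fun x hx => lt_of_lt_of_le (by positivity) (hDlb x hx)
  have hDub : ∀ x ∈ K, |D x| ≤ E^2 := by
    intro x hx
    have h1 : |deriv f x - a x| ≤ E := by
      rw [hE]
      have := hBf1 x hx; have := hBa x hx
      rw [Real.norm_eq_abs] at *
      calc |deriv f x - a x| ≤ |deriv f x| + |a x| := abs_sub _ _
        _ ≤ Bf1 + Ba := by gcongr <;> assumption
    have h2 : |s - a x| ≤ E := by
      rw [hE]
      have := hBa x hx
      rw [Real.norm_eq_abs] at this
      calc |s - a x| ≤ |s| + |a x| := abs_sub _ _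
        _ ≤ Bf1 + Ba := by gcongr <;> assumption
    rw [hD]
    calc |(deriv f x - a x) * (s - a x)| = |deriv f x - a x| * |s - a x| := abs_mul _ _
      _ ≤ E * E := mul_le_mul h1 h2 (abs_nonneg _) hE0
      _ = E^2 := (sq E).symm
  have hDlip : ∀ x ∈ K, ∀ y ∈ K, |D x - D y| ≤ LD * |x - y| := by
    intro x hx y hy
    have h1 : D x - D y = (deriv f x - a x) * ((s - a x) - (s - a y))
        + (s - a y) * ((deriv f x - a x) - (deriv f y - a y)) := by rw [hD]; ring
    have h2 : |deriv f x - a x| ≤ E := by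
      rw [hE]
      have := hBf1 x hx; have := hBa x hx
      rw [Real.norm_eq_abs] at *
      calc |deriv f x - a x| ≤ |deriv f x| + |a x| := abs_sub _ _
        _ ≤ Bf1 + Ba := by gcongr <;> assumption
    have h3 : |s - a y| ≤ E := by
      rw [hE]
      have := hBa y hy
      rw [Real.norm_eq_abs] at this
      calc |s - a y| ≤ |s| + |a y| := abs_sub _ _
        _ ≤ Bf1 + Ba := by gcongr <;> assumption
    have h4 : |(s - a x) - (s - a y)| ≤ Ba1 * |x - y| := by
      have : (s - a x) - (s - a y) = a y - a x := by ring
      rw [this]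
      have := lipa x hx y hy
      rwa [abs_sub_comm y x] at this
    have h5 : |(deriv f x - a x) - (deriv f y - a y)| ≤ (Bf2 + Ba1) * |x - y| := by
      have e : (deriv f x - a x) - (deriv f y - a y) = (deriv f x - deriv f y) + (a y - a x) := by
        ring
      rw [e]
      have l1 := lipf' y hy x hx
      have l2 := lipa x hx y hy
      have l2' : |a y - a x| ≤ Ba1 * |x - y| := by rwa [abs_sub_comm y x] at l2
      calc |(deriv f x - deriv f y) + (a y - a x)|
          ≤ |deriv f x - deriv f y| + |a y - a x| := abs_add_le _ _
        _ ≤ Bf2 * |x - y| + Ba1 * |x - y| := add_le_add l1 l2'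
        _ = (Bf2 + Ba1) * |x - y| := by ring
    rw [h1, hLD]
    calc |(deriv f x - a x) * ((s - a x) - (s - a y))
        + (s - a y) * ((deriv f x - a x) - (deriv f y - a y))|
        ≤ |(deriv f x - a x)| * |((s - a x) - (s - a y))|
          + |(s - a y)| * |((deriv f x - a x) - (deriv f y - a y))| := by
          have h := abs_add_le ((deriv f x - a x) * ((s - a x) - (s - a y)))
            ((s - a y) * ((deriv f x - a x) - (deriv f y - a y)))
          rw [abs_mul (deriv f x - a x) ((s - a x) - (s - a y)),
            abs_mul (s - a y) ((deriv f x - a x) - (deriv f y - a y))] at h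
          exact h
      _ ≤ E * (Ba1 * |x - y|) + E * ((Bf2 + Ba1) * |x - y|) := by
          refine add_le_add ?_ ?_
          · exact mul_le_mul h2 h4 (abs_nonneg _) hE0
          · exact mul_le_mul h3 h5 (abs_nonneg _) hE0
      _ = (E * Ba1 + E * (Bf2 + Ba1)) * |x - y| := by ring
  have hglip : ∀ x ∈ K, ∀ y ∈ K, |g y - g x| ≤ Lg * |y - x| := by
    intro x hx y hy
    have hDx := hDpos x hx; have hDy := hDpos y hy
    have hdiff : g y - g x = ((deriv a y - deriv a x) * D x + deriv a x * (D x - D y))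
        / (D y * D x) := by
      show deriv a y / D y - deriv a x / D x = _
      rw [div_sub_div _ _ hDy.ne' hDx.ne']
      ring
    rw [hdiff, abs_div]
    have hnum : |(deriv a y - deriv a x) * D x + deriv a x * (D x - D y)|
        ≤ (Ba2 * E^2 + Ba1 * LD) * |y - x| := by
      have l1 := lipa' x hx y hy
      have l2 := hDub x hx
      have l3 : |deriv a x| ≤ Ba1 := by
        have := hBa1 x hx; rwa [Real.norm_eq_abs] at this
      have l4 := hDlip x hx y hy
      rw [abs_sub_comm x y] at l4
      calc |(deriv a y - deriv a x) * D x + deriv a x * (D x - D y)|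
          ≤ |deriv a y - deriv a x| * |D x| + |deriv a x| * |D x - D y| := by
            have h := abs_add_le ((deriv a y - deriv a x) * D x) (deriv a x * (D x - D y))
            rw [abs_mul (deriv a y - deriv a x) (D x), abs_mul (deriv a x) (D x - D y)] at h
            exact h
        _ ≤ (Ba2 * |y - x|) * E^2 + Ba1 * (LD * |y - x|) := by
            refine add_le_add ?_ ?_
            · exact mul_le_mul l1 l2 (abs_nonneg _) (mul_nonneg hBa20 (abs_nonneg _))
            · exact mul_le_mul l3 l4 (abs_nonneg _) hBa10
        _ = (Ba2 * E^2 + Ba1 * LD) * |y - x| := by ring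
    have hden : δ0^4 ≤ |D y * D x| := by
      rw [abs_of_pos (mul_pos hDy hDx)]
      calc δ0^4 = δ0^2 * δ0^2 := by ring
        _ ≤ D y * D x := mul_le_mul (hDlb y hy) (hDlb x hx) (sq_nonneg δ0) (le_of_lt hDy)
    calc |(deriv a y - deriv a x) * D x + deriv a x * (D x - D y)| / |D y * D x|
        ≤ ((Ba2 * E^2 + Ba1 * LD) * |y - x|) / δ0^4 :=
          div_le_div₀ (mul_nonneg (by positivity) (abs_nonneg _)) hnum (by positivity) hden
      _ = Lg * |y - x| := by rw [hLg]; ring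
  have huIcc : uIcc v w = Icc v w := uIcc_of_le hvw.le
  have hInt : ∀ F : ℝ → ℝ, ContinuousOn F (Icc v w) →
      IntervalIntegrable F MeasureTheory.volume v w := by
    intro F hF
    apply ContinuousOn.intervalIntegrable
    rwa [huIcc]
  have hcontg : ContinuousOn g (Icc v w) := by
    apply ContinuousOn.div hac'.continuousOn
    · exact (hfc'.continuousOn.sub hac.continuousOn).mul
        (continuousOn_const.sub hac.continuousOn)
    · intro x hx; exact ne_of_gt (hDpos x (hIK hx))
  -- the exponent ψ
  set ψ : ℝ := ∫ x in v..w, (g x - g v) * (s - deriv f x) with hψ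
  have hψ_bound : |ψ| ≤ C₁ * (w - v)^3 := by
    have hb : ‖∫ x in v..w, (g x - g v) * (s - deriv f x)‖
        ≤ (Lg * (w - v) * (Bf2 * (w - v))) * |w - v| := by
      apply intervalIntegral.norm_integral_le_of_norm_le_const
      intro x hx
      have hxI : x ∈ Icc v w := hIoc hx
      have h1 : |g x - g v| ≤ Lg * (w - v) := by
        have hgl := hglip v hv x (hIK hxI)
        have h2 : |x - v| ≤ w - v := by
          rw [abs_of_nonneg (by linarith [hxI.1])]; linarith [hxI.2]
        calc |g x - g v| ≤ Lg * |x - v| := hgl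
          _ ≤ Lg * (w - v) := by nlinarith
      have h2 := hsf x hxI
      rw [Real.norm_eq_abs, abs_mul]
      exact mul_le_mul h1 h2 (abs_nonneg _) (by positivity)
    rw [hψ, ← Real.norm_eq_abs]
    calc ‖∫ x in v..w, (g x - g v) * (s - deriv f x)‖
        ≤ (Lg * (w - v) * (Bf2 * (w - v))) * |w - v| := hb
      _ = C₁ * (w - v)^3 := by rw [hC₁, abs_of_pos hδpos]; ring
  -- identity for ψ
  have hint0 : ∫ x in v..w, (s - deriv f x) = 0 := by
    rw [intervalIntegral.integral_sub intervalIntegrable_const (hfc'.intervalIntegrable v w),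
      hFTC, intervalIntegral.integral_const, smul_eq_mul]
    nlinarith [hsδ]
  have hcont_sf : ContinuousOn (fun x => s - deriv f x) (Icc v w) :=
    continuousOn_const.sub hfc'.continuousOn
  have hsplit : ψ = ∫ x in v..w, g x * (s - deriv f x) := by
    rw [hψ]
    have he : EqOn (fun x => (g x - g v) * (s - deriv f x))
        (fun x => g x * (s - deriv f x) - g v * (s - deriv f x)) (uIcc v w) := by
      intro x _; simp only []; ring
    rw [intervalIntegral.integral_congr he,
      intervalIntegral.integral_sub (hInt (fun x => g x * (s - deriv f x)) (hcontg.mul hcont_sf))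
        (hInt (fun x => g v * (s - deriv f x)) (continuousOn_const.mul hcont_sf)),
      intervalIntegral.integral_const_mul, hint0, mul_zero, sub_zero]
  have hden1 : ∀ x ∈ Icc v w, deriv f x - a x ≠ 0 := fun x hx =>
    ne_of_gt (lt_of_lt_of_le hδ0 (hgap x (hIK hx)))
  have hden2 : ∀ x ∈ Icc v w, s - a x ≠ 0 := fun x hx =>
    ne_of_gt (lt_of_lt_of_le hδ0 (hsgap x (hIK hx)))
  have hcontq1 : ContinuousOn (fun x => deriv a x / (deriv f x - a x)) (Icc v w) :=
    ContinuousOn.div hac'.continuousOn (hfc'.continuousOn.sub hac.continuousOn) hden1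
  have hcontq2 : ContinuousOn (fun x => deriv a x / (s - a x)) (Icc v w) :=
    ContinuousOn.div hac'.continuousOn (continuousOn_const.sub hac.continuousOn) hden2
  have hsplit2 : ψ = (∫ x in v..w, deriv a x / (deriv f x - a x))
      - ∫ x in v..w, deriv a x / (s - a x) := by
    rw [hsplit]
    have he : EqOn (fun x => g x * (s - deriv f x))
        (fun x => deriv a x / (deriv f x - a x) - deriv a x / (s - a x)) (uIcc v w) := by
      intro x hx
      rw [huIcc] at hx
      have h1 := hden1 x hx
      have h2 := hden2 x hx
      show deriv a x / ((deriv f x - a x) * (s - a x)) * (s - deriv f x) = _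
      field_simp
      ring
    rw [intervalIntegral.integral_congr he,
      intervalIntegral.integral_sub (hInt _ hcontq1) (hInt _ hcontq2)]
  -- FTC for the A-part
  have hq1val : ∫ x in v..w, deriv a x / (deriv f x - a x) = A v - A w := by
    have hd : ∀ x ∈ uIcc v w, HasDerivAt A (deriv a x / (a x - deriv f x)) x := by
      intro x hx
      exact hA x (hIK (huIcc ▸ hx))
    have hcontq3 : ContinuousOn (fun x => deriv a x / (a x - deriv f x)) (Icc v w) := by
      apply ContinuousOn.div hac'.continuousOn (hac.continuousOn.sub hfc'.continuousOn)
      intro x hx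
      have := hgap x (hIK hx)
      intro hcontra; have h5 : a x - deriv f x = 0 := hcontra; nlinarith
    have hint3 := intervalIntegral.integral_eq_sub_of_hasDerivAt hd (hInt _ hcontq3)
    have he : EqOn (fun x => deriv a x / (deriv f x - a x))
        (fun x => -(deriv a x / (a x - deriv f x))) (uIcc v w) := by
      intro x hx
      rw [huIcc] at hx
      have h1 := hden1 x hx
      have h2 : a x - deriv f x ≠ 0 := fun hc => h1 (by linarith)
      simp only []
      field_simp
      ring
    rw [intervalIntegral.integral_congr he, intervalIntegral.integral_neg, hint3]
    ring
  -- FTC for the log-part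
  have hsav : (0:ℝ) < s - a v := lt_of_lt_of_le hδ0 (hsgap v hv)
  have hsaw : (0:ℝ) < s - a w := lt_of_lt_of_le hδ0 (hsgap w hw)
  have hq2val : ∫ x in v..w, deriv a x / (s - a x)
      = Real.log (s - a v) - Real.log (s - a w) := by
    have hd : ∀ x ∈ uIcc v w, HasDerivAt (fun y => Real.log (s - a y))
        (-(deriv a x / (s - a x))) x := by
      intro x hx
      rw [huIcc] at hx
      have h1 : HasDerivAt (fun y => s - a y) (-deriv a x) x :=
        ((ha1 x).hasDerivAt).const_sub s
      have h2 := h1.log (hden2 x hx)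
      simpa [neg_div] using h2
    have hcontq2' : ContinuousOn (fun x => -(deriv a x / (s - a x))) (Icc v w) :=
      hcontq2.neg
    have h3 := intervalIntegral.integral_eq_sub_of_hasDerivAt hd (hInt _ hcontq2')
    rw [intervalIntegral.integral_neg] at h3
    linarith
  have hψval : ψ = (A v - A w) + (Real.log (s - a w) - Real.log (s - a v)) := by
    rw [hsplit2, hq1val, hq2val]; ring
  -- r = exp ψ
  have hrψ : rFun f a A (v, w) = Real.exp ψ := by
    have e1 : divDiff f (v, w) = s := by
      rw [divDiff, if_neg (show ((v,w) : ℝ × ℝ).1 ≠ ((v,w) : ℝ × ℝ).2 from ne_of_lt hvw)]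
    rw [rFun, e1, hψval]
    simp only [Real.exp_add, Real.exp_sub]
    rw [Real.exp_log hsaw, Real.exp_log hsav]
    ring
  -- conclusion
  have h1 : |rFun f a A (v, w) - 1| ≤ |ψ| * Real.exp |ψ| := by
    rw [hrψ]; exact abs_exp_sub_one_le ψ
  have h3 : C₁ * (w - v)^3 ≤ (C₁ + 1) * (2*M)^3 := by
    have hp : (w - v)^3 ≤ (2*M)^3 := pow_le_pow_left₀ hδpos.le hδ2M 3
    nlinarith [pow_pos hδpos 3, pow_pos (by linarith : (0:ℝ) < 2*M) 3]
  calc |rFun f a A (v, w) - 1| ≤ |ψ| * Real.exp |ψ| := h1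
    _ ≤ (C₁ * (w - v)^3) * Real.exp ((C₁ + 1) * (2*M)^3) := by
        refine mul_le_mul hψ_bound (Real.exp_le_exp.2 (le_trans hψ_bound h3)) ?_ ?_
        · exact (Real.exp_pos _).le.trans (le_refl _) |>.trans (le_refl _) |>.trans
            (le_of_eq rfl) |>.trans (le_refl _) |>.trans (le_refl _) |>.trans (le_refl _)
        · positivity
    _ ≤ ((C₁ + 1) * Real.exp ((C₁ + 1) * (2*M)^3)) * (w - v)^3 := by
        nlinarith [Real.exp_pos ((C₁ + 1) * (2*M)^3), pow_pos hδpos 3]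

/-- **Variation of the Riemann invariant `Z` through a composite wave.**
Under uniform strict hyperbolicity there is `C > 0` such that for any chain
`u₀ < u₁ < … < u_m` in `[-M,M]` and values `Z₀, …, Z_m` with each step either
constant (rarefaction piece) or multiplied by `r` (jump piece), one has
`max_i |Z_i| ≤ |Z_m| exp(C (u_m - u₀)³)` and
`Σ |Z_i - Z_{i-1}| ≤ C |Z_m| (u_m - u₀)³ exp(C (u_m - u₀)³)`. -/
theorem composite_wave_Z_estimates (M : ℝ) (hM : 0 < M) (f a A : ℝ → ℝ)
    (hf : ContDiff ℝ 4 f) (ha : ContDiff ℝ 3 a)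
    (hUSH : sSup (a '' Icc (-M) M) < sInf (deriv f '' Icc (-M) M))
    (hA : ∀ ξ ∈ Icc (-M) M, HasDerivAt A (deriv a ξ / (a ξ - deriv f ξ)) ξ) :
    ∃ C : ℝ, 0 < C ∧
      ∀ (m : ℕ), 1 ≤ m →
        ∀ u : Fin (m+1) → ℝ, StrictMono u → (∀ i, u i ∈ Icc (-M) M) →
          ∀ Z : Fin (m+1) → ℝ,
            (∀ i : Fin m, Z i.castSucc = Z i.succ ∨
              Z i.castSucc = Z i.succ * rFun f a A (u i.castSucc, u i.succ)) →
            (∀ i, |Z i| ≤ |Z (Fin.last m)| *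
              Real.exp (C * (u (Fin.last m) - u 0) ^ 3)) ∧
            (∑ i : Fin m, |Z i.succ - Z i.castSucc|) ≤
              C * |Z (Fin.last m)| * (u (Fin.last m) - u 0) ^ 3 *
                Real.exp (C * (u (Fin.last m) - u 0) ^ 3) := by
  obtain ⟨C, hC, hr⟩ := rFun_cubic M hM f a A hf ha hUSH hA
  refine ⟨C, hC, ?_⟩
  intro m hm u hu huK Z hZ
  set σ : ℝ := u (Fin.last m) - u 0 with hσ
  have hσ0 : 0 ≤ σ := by
    rw [hσ]
    have := hu.monotone (Fin.zero_le (Fin.last m))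
    linarith
  have hd : ∀ i : Fin m, 0 < u i.succ - u i.castSucc := fun i =>
    sub_pos.2 (hu (Fin.castSucc_lt_succ (i := i)))
  have hri : ∀ i : Fin m, |rFun f a A (u i.castSucc, u i.succ) - 1|
      ≤ C * (u i.succ - u i.castSucc)^3 := fun i =>
    hr (u i.castSucc) (u i.succ) (huK _) (huK _) (hu (Fin.castSucc_lt_succ (i := i)))
  have hstep : ∀ i : Fin m, |Z i.castSucc|
      ≤ |Z i.succ| * Real.exp (C * (u i.succ - u i.castSucc)^3) := by
    intro i
    have hdn : 0 ≤ C * (u i.succ - u i.castSucc)^3 :=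
      mul_nonneg hC.le (pow_nonneg (hd i).le 3)
    have hE1 : 1 ≤ Real.exp (C * (u i.succ - u i.castSucc)^3) := Real.one_le_exp hdn
    rcases hZ i with h | h
    · rw [h]; nlinarith [abs_nonneg (Z i.succ)]
    · rw [h, abs_mul]
      have h2 : |rFun f a A (u i.castSucc, u i.succ)|
          ≤ Real.exp (C * (u i.succ - u i.castSucc)^3) := by
        have h3 := hri i
        have h4 := abs_sub_abs_le_abs_sub (rFun f a A (u i.castSucc, u i.succ)) 1
        have h5 := Real.add_one_le_exp (C * (u i.succ - u i.castSucc)^3)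
        simp only [abs_one] at h4
        linarith
      exact mul_le_mul_of_nonneg_left h2 (abs_nonneg _)
  have hmax : ∀ i : Fin (m+1),
      |Z i| ≤ |Z (Fin.last m)| * Real.exp (C * (u (Fin.last m) - u i)^3) := by
    intro i
    induction i using Fin.reverseInduction with
    | last => simp
    | cast i ih =>
      have h1 := hstep i
      have hx : 0 ≤ u (Fin.last m) - u i.succ :=
        sub_nonneg.2 (hu.monotone (Fin.le_last i.succ))
      have hy := (hd i).le
      have hcube : (u (Fin.last m) - u i.succ)^3 + (u i.succ - u i.castSucc)^3
          ≤ (u (Fin.last m) - u i.castSucc)^3 := by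
        nlinarith [mul_nonneg (mul_nonneg hx hx) hy, mul_nonneg (mul_nonneg hx hy) hy]
      calc |Z i.castSucc|
          ≤ |Z i.succ| * Real.exp (C * (u i.succ - u i.castSucc)^3) := h1
        _ ≤ (|Z (Fin.last m)| * Real.exp (C * (u (Fin.last m) - u i.succ)^3))
              * Real.exp (C * (u i.succ - u i.castSucc)^3) :=
            mul_le_mul_of_nonneg_right ih (Real.exp_pos _).le
        _ = |Z (Fin.last m)| * Real.exp (C * (u (Fin.last m) - u i.succ)^3
              + C * (u i.succ - u i.castSucc)^3) := by rw [Real.exp_add]; ring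
        _ ≤ |Z (Fin.last m)| * Real.exp (C * (u (Fin.last m) - u i.castSucc)^3) := by
            refine mul_le_mul_of_nonneg_left ?_ (abs_nonneg _)
            refine Real.exp_le_exp.2 ?_
            have := mul_le_mul_of_nonneg_left hcube hC.le
            linarith
  have hmaxσ : ∀ i, |Z i| ≤ |Z (Fin.last m)| * Real.exp (C * σ^3) := by
    intro i
    refine le_trans (hmax i) ?_
    refine mul_le_mul_of_nonneg_left ?_ (abs_nonneg _)
    refine Real.exp_le_exp.2 ?_
    have h1 : u (Fin.last m) - u i ≤ σ := by
      rw [hσ]; have := hu.monotone (Fin.zero_le i); linarith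
    have h2 : 0 ≤ u (Fin.last m) - u i := sub_nonneg.2 (hu.monotone (Fin.le_last i))
    have h3 : (u (Fin.last m) - u i)^3 ≤ σ^3 := pow_le_pow_left₀ h2 h1 3
    exact mul_le_mul_of_nonneg_left h3 hC.le
  refine ⟨hmaxσ, ?_⟩
  have hterm : ∀ i : Fin m, |Z i.succ - Z i.castSucc|
      ≤ (|Z (Fin.last m)| * Real.exp (C * σ^3)) * (C * (u i.succ - u i.castSucc)^3) := by
    intro i
    have hdn : 0 ≤ C * (u i.succ - u i.castSucc)^3 :=
      mul_nonneg hC.le (pow_nonneg (hd i).le 3)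
    rcases hZ i with h | h
    · rw [h]
      simp only [sub_self, abs_zero]
      exact mul_nonneg (mul_nonneg (abs_nonneg _) (Real.exp_pos _).le) hdn
    · have he : Z i.succ - Z i.castSucc
          = Z i.succ * (1 - rFun f a A (u i.castSucc, u i.succ)) := by rw [h]; ring
      rw [he, abs_mul]
      have h2 : |1 - rFun f a A (u i.castSucc, u i.succ)|
          ≤ C * (u i.succ - u i.castSucc)^3 := by
        rw [abs_sub_comm]; exact hri i
      exact mul_le_mul (hmaxσ _) h2 (abs_nonneg _)
        (mul_nonneg (abs_nonneg _) (Real.exp_pos _).le)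
  have hsum3 : ∑ i : Fin m, (u i.succ - u i.castSucc)^3 ≤ σ^3 := by
    have h1 := sum_pow_three_le (fun i : Fin m => u i.succ - u i.castSucc)
      (fun i => (hd i).le)
    rw [telescope_fin u] at h1
    exact h1
  calc ∑ i : Fin m, |Z i.succ - Z i.castSucc|
      ≤ ∑ i : Fin m, (|Z (Fin.last m)| * Real.exp (C * σ^3))
          * (C * (u i.succ - u i.castSucc)^3) := Finset.sum_le_sum fun i _ => hterm i
    _ = (|Z (Fin.last m)| * Real.exp (C * σ^3) * C)
          * ∑ i : Fin m, (u i.succ - u i.castSucc)^3 := by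
        rw [Finset.mul_sum]
        exact Finset.sum_congr rfl fun i _ => by ring
    _ ≤ (|Z (Fin.last m)| * Real.exp (C * σ^3) * C) * σ^3 := by
        refine mul_le_mul_of_nonneg_left hsum3 ?_
        exact mul_nonneg (mul_nonneg (abs_nonneg _) (Real.exp_pos _).le) hC.le
    _ = C * |Z (Fin.last m)| * σ^3 * Real.exp (C * σ^3) := by ring
end

section
/- For n ≥ 0 let x_n := 1 − 2^{−n}, and for n ≥ 1 let B_n := 2^{−(n+1)} (so that x_n = x_{n−1} + 2B_n) and b_n := (n + 26)^{−1/3}. Define u₀ : ℝ → ℝ by u₀(x) := Σ_{n≥1} ( b_n · 1_{[x_{n−1}, x_{n−1}+B_n)}(x) − b_n · 1_{[x_{n−1}+B_n, x_n)}(x) ). Then: (i) ‖u₀‖_∞ ≤ 1/3; (ii) for every s with 0 < s < 1/3, TV^s u₀ < ∞, i.e. u₀ ∈ BV^s(ℝ); (iii) TV^{1/3} u₀ = ∞, i.e. u₀ ∉ BV^{1/3}(ℝ); and (iv) Σ_{n≥1} (2b_n)³ = 8 Σ_{n≥1} 1/(n+26) = +∞. -/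
open Real Set

open scoped ENNReal

/-- The `s`-fractional total variation of `u` over the set `S`. -/
noncomputable def TVsOn (u : ℝ → ℝ) (s : ℝ) (S : Set ℝ) : ℝ≥0∞ :=
  ⨆ (n : ℕ) (x : Fin (n+1) → ℝ) (_ : StrictMono x) (_ : ∀ i, x i ∈ S),
    ENNReal.ofReal (∑ i : Fin n, |u (x i.succ) - u (x i.castSucc)| ^ (1/s))

/-- `x_n = 1 - 2^{-n}`. -/
noncomputable def xSeq (n : ℕ) : ℝ := 1 - 1 / 2 ^ n

/-- `B_n = 2^{-(n+1)}` (so `x_n = x_{n-1} + 2 B_n` for `n ≥ 1`). -/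
noncomputable def BSeq (n : ℕ) : ℝ := 1 / 2 ^ (n + 1)

/-- `b_n = (n + 26)^{-1/3}`. -/
noncomputable def bSeq (n : ℕ) : ℝ := 1 / ((n : ℝ) + 26) ^ ((1 : ℝ) / 3)

/-- The blow-up initial datum
`u₀ = Σ_{n≥1} (b_n 1_{[x_{n-1}, x_{n-1}+B_n)} - b_n 1_{[x_{n-1}+B_n, x_n)})`
(the sum over `n ≥ 1` is realized as a sum over `m = n - 1 ∈ ℕ`). -/
noncomputable def uBlow (x : ℝ) : ℝ :=
  ∑' m : ℕ,
    ((Ico (xSeq m) (xSeq m + BSeq (m + 1))).indicator (fun _ => bSeq (m + 1)) x -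
      (Ico (xSeq m + BSeq (m + 1)) (xSeq (m + 1))).indicator (fun _ => bSeq (m + 1)) x)

lemma xSeq_strictMono : StrictMono xSeq := by
  apply strictMono_nat_of_lt_succ
  intro n
  have h : (0:ℝ) < 2 ^ n := by positivity
  simp only [xSeq, pow_succ]
  rw [sub_lt_sub_iff_left, div_lt_div_iff₀ (by positivity) h]
  nlinarith

lemma xSeq_zero : xSeq 0 = 0 := by simp [xSeq]

lemma xSeq_nonneg (n : ℕ) : 0 ≤ xSeq n := by
  rw [← xSeq_zero]; exact xSeq_strictMono.monotone (Nat.zero_le n)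

lemma xSeq_lt_one (n : ℕ) : xSeq n < 1 := by
  have : (0:ℝ) < 1 / 2 ^ n := by positivity
  unfold xSeq; linarith

lemma BSeq_pos (n : ℕ) : 0 < BSeq n := by unfold BSeq; positivity

lemma xSeq_add_two_BSeq (n : ℕ) : xSeq n + 2 * BSeq (n+1) = xSeq (n+1) := by
  have h : (0:ℝ) < 2 ^ n := by positivity
  simp only [xSeq, BSeq, pow_succ]
  ring

lemma bSeq_pos (n : ℕ) : 0 < bSeq n := by
  unfold bSeq
  positivity

lemma bSeq_le_third (n : ℕ) (hn : 1 ≤ n) : bSeq n ≤ 1 / 3 := by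
  unfold bSeq
  have h27 : ((27:ℝ)) ^ ((1:ℝ)/3) = 3 := by
    rw [show (27:ℝ) = 3 ^ (3:ℝ) by norm_num [Real.rpow_natCast], ← Real.rpow_mul (by norm_num)]
    norm_num
  have h1 : (27:ℝ) ≤ (n:ℝ) + 26 := by
    have : (1:ℝ) ≤ n := by exact_mod_cast hn
    linarith
  have h2 : (3:ℝ) ≤ ((n:ℝ) + 26) ^ ((1:ℝ)/3) := by
    have := Real.rpow_le_rpow (x := 27) (by norm_num) h1 (z := (1:ℝ)/3) (by norm_num)
    rwa [h27] at this
  rw [div_le_div_iff₀ (by positivity) (by norm_num)]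
  linarith

/-- breakpoints: t (2m) = x_m, t (2m+1) = x_m + B_{m+1} -/
noncomputable def tSeq (k : ℕ) : ℝ :=
  if k % 2 = 0 then xSeq (k / 2) else xSeq (k / 2) + BSeq (k / 2 + 1)

lemma tSeq_even (m : ℕ) : tSeq (2 * m) = xSeq m := by
  simp [tSeq, Nat.mul_div_cancel_left m (by norm_num : 0 < 2), Nat.mul_mod_right]

lemma tSeq_odd (m : ℕ) : tSeq (2 * m + 1) = xSeq m + BSeq (m + 1) := by
  have h1 : (2 * m + 1) % 2 = 1 := by omega
  have h2 : (2 * m + 1) / 2 = m := by omega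
  simp [tSeq, h1, h2]

lemma tSeq_strictMono : StrictMono tSeq := by
  apply strictMono_nat_of_lt_succ
  intro k
  rcases Nat.even_or_odd k with ⟨m, hm⟩ | ⟨m, hm⟩
  · subst hm
    rw [show m + m = 2 * m by ring, tSeq_even, tSeq_odd]
    have := BSeq_pos (m + 1); linarith
  · subst hm
    rw [show 2 * m + 1 + 1 = 2 * (m + 1) by ring, tSeq_odd, tSeq_even]
    have := xSeq_add_two_BSeq m
    have := BSeq_pos (m + 1)
    linarith

lemma tSeq_zero : tSeq 0 = 0 := by
  rw [show 0 = 2 * 0 by ring, tSeq_even, xSeq_zero]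

lemma tSeq_lt_one (k : ℕ) : tSeq k < 1 := by
  rcases Nat.even_or_odd k with ⟨m, hm⟩ | ⟨m, hm⟩
  · subst hm; rw [show m + m = 2 * m by ring, tSeq_even]; exact xSeq_lt_one m
  · subst hm; rw [tSeq_odd]
    have h := xSeq_add_two_BSeq m
    have := BSeq_pos (m + 1)
    have := xSeq_lt_one (m + 1)
    linarith

lemma tSeq_nonneg (k : ℕ) : 0 ≤ tSeq k := by
  rw [← tSeq_zero]; exact tSeq_strictMono.monotone (Nat.zero_le k)

lemma one_le_of_forall_tSeq_le (x : ℝ) (h : ∀ k, tSeq k ≤ x) : 1 ≤ x := by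
  by_contra hx
  push_neg at hx
  -- find m with 1 - 1/2^m > x, i.e. 1/2^m < 1 - x
  obtain ⟨m, hm⟩ := pow_unbounded_of_one_lt (1 / (1 - x)) (by norm_num : (1:ℝ) < 2)
  have hx1 : 0 < 1 - x := by linarith
  have h2m : (0:ℝ) < 2 ^ m := by positivity
  have : 1 / 2 ^ m < 1 - x := by
    rw [div_lt_iff₀ h2m]
    rw [div_lt_iff₀ hx1] at hm
    nlinarith
  have := h (2 * m)
  rw [tSeq_even] at this
  unfold xSeq at this
  linarith

open scoped Classical in
noncomputable def JIdx (x : ℝ) : ℕ∞ :=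
  if h : ∃ k, x < tSeq k then (Nat.find h : ℕ∞) else ⊤

lemma JIdx_mono : Monotone JIdx := by
  intro x y hxy
  unfold JIdx
  by_cases hy : ∃ k, y < tSeq k
  · have hx : ∃ k, x < tSeq k := ⟨hy.choose, lt_of_le_of_lt hxy hy.choose_spec⟩
    rw [dif_pos hx, dif_pos hy]
    have : Nat.find hx ≤ Nat.find hy :=
      Nat.find_min' hx (lt_of_le_of_lt hxy (Nat.find_spec hy))
    exact_mod_cast this
  · rw [dif_neg hy]; exact le_top

lemma JIdx_eq_coe_iff (x : ℝ) (k : ℕ) :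
    JIdx x = (k : ℕ∞) ↔ (x < tSeq k ∧ ∀ j < k, tSeq j ≤ x) := by
  unfold JIdx
  constructor
  · intro h
    by_cases hx : ∃ j, x < tSeq j
    · rw [dif_pos hx] at h
      have hk : Nat.find hx = k := by exact_mod_cast h
      subst hk
      exact ⟨Nat.find_spec hx, fun j hj => le_of_not_gt (Nat.find_min hx hj)⟩
    · rw [dif_neg hx] at h; exact absurd h (by simp)
  · rintro ⟨h1, h2⟩
    have hx : ∃ j, x < tSeq j := ⟨k, h1⟩
    rw [dif_pos hx]
    have : Nat.find hx = k :=
      le_antisymm (Nat.find_min' hx h1)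
        (le_of_not_gt (fun hlt => absurd (Nat.find_spec hx) (not_lt.mpr (h2 _ hlt))))
    exact_mod_cast this

lemma JIdx_eq_top_iff (x : ℝ) : JIdx x = ⊤ ↔ 1 ≤ x := by
  unfold JIdx
  constructor
  · intro h
    by_cases hx : ∃ j, x < tSeq j
    · rw [dif_pos hx] at h; exact absurd h (by simp)
    · push_neg at hx
      exact one_le_of_forall_tSeq_le x hx
  · intro h
    rw [dif_neg]
    push_neg
    intro k
    linarith [tSeq_lt_one k]

/-- piece values -/
noncomputable def cN : ℕ → ℝ
  | 0 => 0
  | (j+1) => if j % 2 = 0 then bSeq (j / 2 + 1) else -bSeq (j / 2 + 1)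

noncomputable def cSeq : ℕ∞ → ℝ := fun e => e.recTopCoe 0 cN

@[simp] lemma cSeq_top : cSeq ⊤ = 0 := rfl
@[simp] lemma cSeq_coe (k : ℕ) : cSeq (k : ℕ∞) = cN k := rfl

lemma cN_succ (j : ℕ) : cN (j + 1) = if j % 2 = 0 then bSeq (j / 2 + 1) else -bSeq (j / 2 + 1) := rfl

lemma abs_cN_succ (j : ℕ) : |cN (j + 1)| = bSeq (j / 2 + 1) := by
  rw [cN_succ]
  rcases Nat.even_or_odd j with ⟨m, hm⟩ | ⟨m, hm⟩
  · rw [if_pos (by omega)]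
    exact abs_of_pos (bSeq_pos _)
  · rw [if_neg (by omega), abs_neg]
    exact abs_of_pos (bSeq_pos _)

lemma abs_cSeq_le (e : ℕ∞) : |cSeq e| ≤ 1 / 3 := by
  induction e using WithTop.recTopCoe with
  | top => show |(0:ℝ)| ≤ 1/3; norm_num
  | coe k =>
    show |cN k| ≤ 1/3
    match k with
    | 0 => show |(0:ℝ)| ≤ 1/3; norm_num
    | (j+1) => rw [abs_cN_succ]; exact bSeq_le_third _ (by omega)

noncomputable def uTerm (m : ℕ) (x : ℝ) : ℝ :=
  (Ico (xSeq m) (xSeq m + BSeq (m + 1))).indicator (fun _ => bSeq (m + 1)) x -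
    (Ico (xSeq m + BSeq (m + 1)) (xSeq (m + 1))).indicator (fun _ => bSeq (m + 1)) x

lemma uBlow_eq_tsum (x : ℝ) : uBlow x = ∑' m, uTerm m x := rfl

lemma uTerm_eq_zero_of_not_mem (m : ℕ) (x : ℝ) (hx : x ∉ Ico (xSeq m) (xSeq (m+1))) :
    uTerm m x = 0 := by
  have hB := BSeq_pos (m + 1)
  have h2 := xSeq_add_two_BSeq m
  simp only [mem_Ico, not_and, not_lt] at hx
  unfold uTerm
  rw [indicator_of_notMem, indicator_of_notMem, sub_zero]
  · simp only [mem_Ico, not_and, not_lt]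
    intro h1
    by_cases h0 : xSeq m ≤ x
    · linarith [hx h0]
    · push_neg at h0; linarith
  · simp only [mem_Ico, not_and, not_lt]
    intro h1
    by_cases h0 : xSeq m ≤ x
    · linarith [hx h0]
    · push_neg at h0; linarith

lemma not_mem_of_ne (m m' : ℕ) (x : ℝ) (hx : x ∈ Ico (xSeq m) (xSeq (m+1))) (hne : m' ≠ m) :
    x ∉ Ico (xSeq m') (xSeq (m'+1)) := by
  obtain ⟨h1, h2⟩ := hx
  rcases lt_or_gt_of_ne hne with h | h
  · have : xSeq (m' + 1) ≤ xSeq m := xSeq_strictMono.monotone (by omega)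
    simp only [mem_Ico, not_and, not_lt]
    intro; linarith
  · have : xSeq (m + 1) ≤ xSeq m' := xSeq_strictMono.monotone (by omega)
    simp only [mem_Ico, not_and, not_lt]
    intro; linarith

lemma uBlow_of_mem (m : ℕ) (x : ℝ) (hx : x ∈ Ico (xSeq m) (xSeq (m+1))) :
    uBlow x = uTerm m x := by
  rw [uBlow_eq_tsum]
  exact tsum_eq_single m (fun m' hne => uTerm_eq_zero_of_not_mem m' x
    (not_mem_of_ne m m' x hx hne))

lemma uBlow_of_neg (x : ℝ) (hx : x < 0) : uBlow x = 0 := by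
  rw [uBlow_eq_tsum]
  have hz : ∀ m, uTerm m x = 0 := fun m =>
    uTerm_eq_zero_of_not_mem m x (by
      simp only [mem_Ico, not_and, not_lt]
      intro h; linarith [xSeq_nonneg m])
  simp [hz]

lemma uBlow_of_one_le (x : ℝ) (hx : 1 ≤ x) : uBlow x = 0 := by
  rw [uBlow_eq_tsum]
  have hz : ∀ m, uTerm m x = 0 := fun m =>
    uTerm_eq_zero_of_not_mem m x (by
      simp only [mem_Ico, not_and, not_lt]
      intro h; linarith [xSeq_lt_one (m+1)])
  simp [hz]

lemma uBlow_left (m : ℕ) (x : ℝ) (hx : x ∈ Ico (xSeq m) (xSeq m + BSeq (m+1))) :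
    uBlow x = bSeq (m+1) := by
  have hB := BSeq_pos (m + 1)
  have h2 := xSeq_add_two_BSeq m
  obtain ⟨h1', h2'⟩ := hx
  rw [uBlow_of_mem m x ⟨h1', by linarith⟩]
  unfold uTerm
  rw [indicator_of_mem (Set.mem_Ico.mpr ⟨h1', h2'⟩), indicator_of_notMem (by
    simp only [mem_Ico, not_and, not_lt]; intro h; linarith), sub_zero]

lemma uBlow_right (m : ℕ) (x : ℝ) (hx : x ∈ Ico (xSeq m + BSeq (m+1)) (xSeq (m+1))) :
    uBlow x = -bSeq (m+1) := by
  have hB := BSeq_pos (m + 1)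
  have h2 := xSeq_add_two_BSeq m
  obtain ⟨h1', h2'⟩ := hx
  rw [uBlow_of_mem m x ⟨by linarith, h2'⟩]
  unfold uTerm
  rw [indicator_of_notMem (by
    simp only [mem_Ico, not_and, not_lt]; intro h; linarith), indicator_of_mem (Set.mem_Ico.mpr ⟨h1', h2'⟩),
    zero_sub]

lemma uBlow_eq_cSeq_JIdx (x : ℝ) : uBlow x = cSeq (JIdx x) := by
  rcases e : JIdx x with _ | k
  · rw [uBlow_of_one_le x ((JIdx_eq_top_iff x).mp e)]
    rfl
  · have hk : JIdx x = (k : ℕ∞) := e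
    obtain ⟨h1, h2⟩ := (JIdx_eq_coe_iff x k).mp hk
    show uBlow x = cN k
    match k with
    | 0 =>
      rw [tSeq_zero] at h1
      rw [uBlow_of_neg x h1]
      rfl
    | (j+1) =>
      have h3 : tSeq j ≤ x := h2 j (by omega)
      rw [cN_succ]
      rcases Nat.even_or_odd j with ⟨m, hm⟩ | ⟨m, hm⟩
      · have hj : j = 2 * m := by omega
        subst hj
        rw [tSeq_even] at h3
        rw [show 2 * m + 1 = 2 * m + 1 from rfl, tSeq_odd] at h1
        rw [if_pos (by omega), show 2 * m / 2 = m by omega]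
        exact uBlow_left m x (Set.mem_Ico.mpr ⟨h3, h1⟩)
      · subst hm
        rw [tSeq_odd] at h3
        rw [show 2 * m + 1 + 1 = 2 * (m + 1) by ring, tSeq_even] at h1
        rw [if_neg (by omega), show (2 * m + 1) / 2 = m by omega]
        rw [uBlow_right m x (Set.mem_Ico.mpr ⟨h3, h1⟩)]

lemma abs_uBlow_le (x : ℝ) : |uBlow x| ≤ 1 / 3 := by
  rw [uBlow_eq_cSeq_JIdx]; exact abs_cSeq_le _

lemma two_bSeq_cube (n : ℕ) : (2 * bSeq n) ^ 3 = 8 * (1 / ((n : ℝ) + 26)) := by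
  have hX : (0:ℝ) ≤ (n : ℝ) + 26 := by positivity
  have hb : bSeq n ^ 3 = 1 / ((n : ℝ) + 26) := by
    unfold bSeq
    rw [div_pow, one_pow, ← Real.rpow_natCast (((n:ℝ) + 26) ^ ((1:ℝ)/3)) 3,
      ← Real.rpow_mul hX]
    norm_num
  rw [mul_pow, hb]
  norm_num

lemma not_summable_cube : ¬ Summable (fun m : ℕ => (2 * bSeq (m + 1)) ^ 3) := by
  intro h
  have h1 : Summable (fun m : ℕ => 8 * (1 / ((m : ℝ) + 27))) := by
    convert h using 2 with m
    rw [two_bSeq_cube]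
    push_cast
    ring_nf
  have h2 : Summable (fun m : ℕ => 1 / ((m : ℝ) + 27)) := by
    have := h1.div_const 8
    convert this using 2 with m
    rfl
    ring
  have h3 : Summable (fun m : ℕ => 1 / ((m + 27 : ℕ) : ℝ)) := by
    convert h2 using 2 with m
    push_cast; ring
  have h4 : Summable (fun m : ℕ => 1 / ((m : ℝ))) :=
    (summable_nat_add_iff (f := fun m : ℕ => 1 / (m : ℝ)) 27).mp h3
  exact Real.not_summable_one_div_natCast h4

lemma abs_sub_rpow_le (p : ℝ) (hp : 0 ≤ p) (a b : ℝ) :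
    |a - b| ^ p ≤ 2 ^ p * (|a| ^ p + |b| ^ p) := by
  have h1 : |a - b| ≤ 2 * max |a| |b| := by
    have := abs_sub a b
    have := le_max_left |a| |b|
    have := le_max_right |a| |b|
    linarith
  have h2 : |a - b| ^ p ≤ (2 * max |a| |b|) ^ p :=
    Real.rpow_le_rpow (abs_nonneg _) h1 hp
  rw [Real.mul_rpow (by norm_num) (le_max_of_le_left (abs_nonneg a))] at h2
  have h3 : (max |a| |b|) ^ p ≤ |a| ^ p + |b| ^ p := by
    rcases le_total |a| |b| with h | h
    · rw [max_eq_right h]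
      have := Real.rpow_nonneg (abs_nonneg a) p
      linarith
    · rw [max_eq_left h]
      have := Real.rpow_nonneg (abs_nonneg b) p
      linarith
  have h4 : (0:ℝ) ≤ 2 ^ p := Real.rpow_nonneg (by norm_num) p
  nlinarith

lemma sum_g_le {ι : Type*} (p : ℝ) (hp : 0 < p)
    (hsum : Summable fun k : ℕ => |cN k| ^ p)
    (D : Finset ι) (f : ι → ℕ∞) (hinj : Set.InjOn f D) :
    ∑ i ∈ D, |cSeq (f i)| ^ p ≤ ∑' k : ℕ, |cN k| ^ p := by
  classical
  rw [show (∑ i ∈ D, |cSeq (f i)| ^ p) = ∑ e ∈ D.image f, |cSeq e| ^ p from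
    (Finset.sum_image (f := fun e : ℕ∞ => |cSeq e| ^ p) (g := f)
      (fun x hx y hy hxy => hinj hx hy hxy)).symm]
  set T : Finset ℕ∞ := D.image f with hT
  have hpre : ∑ e ∈ T, |cSeq e| ^ p
      = ∑ k ∈ T.preimage (fun k : ℕ => (k : ℕ∞)) Nat.cast_injective.injOn,
          |cSeq ((k : ℕ∞))| ^ p := by
    rw [Finset.sum_preimage (fun k : ℕ => (k : ℕ∞)) T Nat.cast_injective.injOn (fun e => |cSeq e| ^ p)]
    intro e heT here
    have : e = ⊤ := by
      induction e using WithTop.recTopCoe with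
      | top => rfl
      | coe k => exact absurd ⟨k, rfl⟩ here
    rw [this, cSeq_top, abs_zero, Real.zero_rpow hp.ne']
  rw [hpre]
  exact hsum.sum_le_tsum _ (fun k _ => Real.rpow_nonneg (abs_nonneg _) p)

lemma fin_succ_le_castSucc {n : ℕ} (i j : Fin n) (h : i < j) :
    (i.succ : Fin (n+1)) ≤ j.castSucc := by
  rw [Fin.le_def]
  simp only [Fin.val_succ, Fin.coe_castSucc]
  exact h

lemma core_bound (p : ℝ) (hp : 0 < p) (hsum : Summable fun k : ℕ => |cN k| ^ p)
    (n : ℕ) (x : Fin (n+1) → ℝ) (hx : StrictMono x) :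
    ∑ i : Fin n, |uBlow (x i.succ) - uBlow (x i.castSucc)| ^ p
      ≤ 2 ^ p * (2 * ∑' k : ℕ, |cN k| ^ p) := by
  classical
  set C := ∑' k : ℕ, |cN k| ^ p with hC
  set k : Fin (n+1) → ℕ∞ := fun i => JIdx (x i) with hk
  have hkmono : Monotone k := fun i j hij => JIdx_mono (hx.monotone hij)
  have hrw : ∀ i, uBlow (x i) = cSeq (k i) := fun i => uBlow_eq_cSeq_JIdx (x i)
  set D : Finset (Fin n) := Finset.univ.filter (fun i => k i.castSucc < k i.succ) with hD
  have hle : ∀ i : Fin n, k i.castSucc ≤ k i.succ :=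
    fun i => hkmono (Fin.castSucc_lt_succ : i.castSucc < i.succ).le
  have step1 : ∑ i : Fin n, |uBlow (x i.succ) - uBlow (x i.castSucc)| ^ p
      = ∑ i ∈ D, |cSeq (k i.succ) - cSeq (k i.castSucc)| ^ p := by
    simp_rw [hrw]
    rw [Finset.sum_subset (Finset.subset_univ D)]
    intro i _ hiD
    have : k i.castSucc = k i.succ := by
      rcases lt_or_eq_of_le (hle i) with h | h
      · exact absurd (Finset.mem_filter.mpr ⟨Finset.mem_univ i, h⟩) hiD
      · exact h
    rw [this, sub_self, abs_zero, Real.zero_rpow hp.ne']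
  have step2 : ∑ i ∈ D, |cSeq (k i.succ) - cSeq (k i.castSucc)| ^ p
      ≤ ∑ i ∈ D, 2 ^ p * (|cSeq (k i.succ)| ^ p + |cSeq (k i.castSucc)| ^ p) :=
    Finset.sum_le_sum (fun i _ => abs_sub_rpow_le p hp.le _ _)
  have hinj1 : Set.InjOn (fun i : Fin n => k i.succ) D := by
    intro i hi j hj hij
    by_contra hne
    rcases lt_or_gt_of_ne hne with h | h
    · have h1 : k i.succ ≤ k j.castSucc := hkmono (fin_succ_le_castSucc i j h)
      have h2 : k j.castSucc < k j.succ := (Finset.mem_filter.mp hj).2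
      exact (lt_of_le_of_lt h1 h2).ne hij
    · have h1 : k j.succ ≤ k i.castSucc := hkmono (fin_succ_le_castSucc j i h)
      have h2 : k i.castSucc < k i.succ := (Finset.mem_filter.mp hi).2
      exact (lt_of_le_of_lt h1 h2).ne' hij
  have hinj2 : Set.InjOn (fun i : Fin n => k i.castSucc) D := by
    intro i hi j hj hij
    by_contra hne
    rcases lt_or_gt_of_ne hne with h | h
    · have h2 : k i.castSucc < k i.succ := (Finset.mem_filter.mp hi).2
      have h1 : k i.succ ≤ k j.castSucc := hkmono (fin_succ_le_castSucc i j h)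
      exact (lt_of_lt_of_le h2 h1).ne hij
    · have h2 : k j.castSucc < k j.succ := (Finset.mem_filter.mp hj).2
      have h1 : k j.succ ≤ k i.castSucc := hkmono (fin_succ_le_castSucc j i h)
      exact (lt_of_lt_of_le h2 h1).ne' hij
  have step3 : ∑ i ∈ D, (|cSeq (k i.succ)| ^ p) ≤ C :=
    sum_g_le p hp hsum D _ hinj1
  have step4 : ∑ i ∈ D, (|cSeq (k i.castSucc)| ^ p) ≤ C :=
    sum_g_le p hp hsum D _ hinj2
  have h2p : (0:ℝ) ≤ 2 ^ p := Real.rpow_nonneg (by norm_num) p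
  calc ∑ i : Fin n, |uBlow (x i.succ) - uBlow (x i.castSucc)| ^ p
      = ∑ i ∈ D, |cSeq (k i.succ) - cSeq (k i.castSucc)| ^ p := step1
    _ ≤ ∑ i ∈ D, 2 ^ p * (|cSeq (k i.succ)| ^ p + |cSeq (k i.castSucc)| ^ p) := step2
    _ = 2 ^ p * (∑ i ∈ D, |cSeq (k i.succ)| ^ p + ∑ i ∈ D, |cSeq (k i.castSucc)| ^ p) := by
        rw [← Finset.mul_sum, Finset.sum_add_distrib]
    _ ≤ 2 ^ p * (C + C) := by
        apply mul_le_mul_of_nonneg_left _ h2p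
        linarith
    _ = 2 ^ p * (2 * C) := by ring

lemma bSeq_rpow (n : ℕ) (p : ℝ) : bSeq n ^ p = (((n:ℝ) + 26) ^ (p/3))⁻¹ := by
  have hX : (0:ℝ) ≤ (n:ℝ) + 26 := by positivity
  unfold bSeq
  rw [one_div]
  rw [Real.inv_rpow (Real.rpow_nonneg hX _), ← Real.rpow_mul hX,
    show (1:ℝ)/3 * p = p/3 by ring]

lemma summable_gN (p : ℝ) (hp : 3 < p) : Summable (fun k : ℕ => |cN k| ^ p) := by
  have hq : 1 < p / 3 := by linarith
  have hq0 : (0:ℝ) < p / 3 := by linarith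
  have hsum : Summable (fun k : ℕ => 2 ^ (p/3) * (1 / (k:ℝ) ^ (p/3))) :=
    ((Real.summable_one_div_nat_rpow).mpr hq).mul_left _
  apply Summable.of_nonneg_of_le
    (fun k => Real.rpow_nonneg (abs_nonneg _) p) _ hsum
  intro k
  match k with
  | 0 =>
    have : |cN 0| = 0 := by simp [cN]
    rw [this, Real.zero_rpow (by linarith)]
    positivity
  | (j+1) =>
    rw [abs_cN_succ, bSeq_rpow]
    set jd := (j / 2 : ℕ) with hjd
    have hcast : ((j:ℝ)) - 1 ≤ 2 * (jd:ℝ) := by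
      have : j ≤ 2 * jd + 1 := by omega
      have := (Nat.cast_le (α := ℝ)).mpr this
      push_cast at this ⊢
      linarith
    have hXpos : (0:ℝ) < (jd:ℝ) + 1 + 26 := by positivity
    have hjpos : (0:ℝ) < ((j+1:ℕ):ℝ) := by positivity
    have hle : ((j+1:ℕ):ℝ) ≤ 2 * ((jd:ℝ) + 1 + 26) := by
      push_cast
      linarith
    have key : ((j+1:ℕ):ℝ) ^ (p/3) ≤ 2 ^ (p/3) * ((jd:ℝ) + 1 + 26) ^ (p/3) := by
      calc ((j+1:ℕ):ℝ) ^ (p/3) ≤ (2 * ((jd:ℝ) + 1 + 26)) ^ (p/3) :=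
            Real.rpow_le_rpow hjpos.le hle hq0.le
       _ = 2 ^ (p/3) * ((jd:ℝ) + 1 + 26) ^ (p/3) :=
            Real.mul_rpow (by norm_num) hXpos.le
    have hA : (0:ℝ) < ((jd:ℝ) + 1 + 26) ^ (p/3) := Real.rpow_pos_of_pos hXpos _
    have hB : (0:ℝ) < ((j+1:ℕ):ℝ) ^ (p/3) := Real.rpow_pos_of_pos hjpos _
    have h2q : (0:ℝ) < (2:ℝ) ^ (p/3) := Real.rpow_pos_of_pos (by norm_num) _
    rw [show ((jd:ℝ) + 1 + 26) = (((jd+1:ℕ):ℝ) + 26) by push_cast; ring] at key hA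
    rw [inv_le_iff_one_le_mul₀ hA]
    have heq : 2 ^ (p/3) * (1 / ((j+1:ℕ):ℝ) ^ (p/3)) * ((((jd+1:ℕ):ℝ)) + 26) ^ (p/3)
        = (2 ^ (p/3) * ((((jd+1:ℕ):ℝ)) + 26) ^ (p/3)) / ((j+1:ℕ):ℝ) ^ (p/3) := by
      ring
    rw [heq, le_div_iff₀ hB]
    linarith

lemma TVsOn_lt_top (s : ℝ) (hs : 0 < s) (hs3 : s < 1/3) :
    TVsOn uBlow s Set.univ < ⊤ := by
  set p := 1/s with hp
  have hp3 : 3 < p := by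
    rw [hp, lt_div_iff₀ hs]; linarith
  have hp0 : 0 < p := by linarith
  have hsum := summable_gN p hp3
  have hbound : TVsOn uBlow s Set.univ
      ≤ ENNReal.ofReal (2 ^ p * (2 * ∑' k : ℕ, |cN k| ^ p)) := by
    refine iSup_le fun n => iSup_le fun x => iSup_le fun hmono => iSup_le fun _ => ?_
    exact ENNReal.ofReal_le_ofReal (core_bound p hp0 hsum n x hmono)
  exact lt_of_le_of_lt hbound ENNReal.ofReal_lt_top

lemma uBlow_tSeq (k : ℕ) : uBlow (tSeq k) = cN (k + 1) := by
  have h : JIdx (tSeq k) = ((k+1 : ℕ) : ℕ∞) := by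
    rw [JIdx_eq_coe_iff]
    exact ⟨tSeq_strictMono (Nat.lt_succ_self k),
      fun j hj => tSeq_strictMono.monotone (by omega)⟩
  rw [uBlow_eq_cSeq_JIdx, h, cSeq_coe]

lemma not_summable_harm : ¬ Summable (fun m : ℕ => 8 * (1 / ((m : ℝ) + 27))) := by
  intro h1
  have h2 : Summable (fun m : ℕ => 1 / ((m : ℝ) + 27)) := by
    have := h1.div_const 8
    convert this using 2 with m
    rfl
    ring
  have h3 : Summable (fun m : ℕ => 1 / ((m + 27 : ℕ) : ℝ)) := by
    convert h2 using 2 with m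
    push_cast; ring
  have h4 : Summable (fun m : ℕ => 1 / ((m : ℝ))) :=
    (summable_nat_add_iff (f := fun m : ℕ => 1 / (m : ℝ)) 27).mp h3
  exact Real.not_summable_one_div_natCast h4

lemma TVsOn_third_eq_top : TVsOn uBlow (1/3) Set.univ = ⊤ := by
  by_contra hT
  have hTlt : TVsOn uBlow (1/3) Set.univ ≠ ⊤ := hT
  -- the partition sums
  have key : ∀ M : ℕ, ∑ m ∈ Finset.range M, 8 * (1 / ((m : ℝ) + 27))
      ≤ (TVsOn uBlow (1/3) Set.univ).toReal := by
    intro M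
    set y : Fin (2*M+1) → ℝ := fun i => tSeq i.val with hy
    have hymono : StrictMono y := fun i j hij => tSeq_strictMono hij
    set S := ∑ i : Fin (2*M), |uBlow (y i.succ) - uBlow (y i.castSucc)| ^ (1/((1:ℝ)/3))
      with hS
    have hterm : ∀ i : Fin (2*M),
        |uBlow (y i.succ) - uBlow (y i.castSucc)| ^ (1/((1:ℝ)/3))
        = |cN (i.val + 2) - cN (i.val + 1)| ^ (1/((1:ℝ)/3)) := by
      intro i
      have h1 : y i.succ = tSeq (i.val + 1) := rfl
      have h2 : y i.castSucc = tSeq i.val := rfl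
      rw [h1, h2, uBlow_tSeq, uBlow_tSeq]
    have hSsum : S = ∑ i ∈ Finset.range (2*M),
        |cN (i + 2) - cN (i + 1)| ^ (1/((1:ℝ)/3)) := by
      rw [hS]
      rw [Finset.sum_congr rfl (fun i _ => hterm i)]
      exact Fin.sum_univ_eq_sum_range (fun i => |cN (i + 2) - cN (i + 1)| ^ (1/((1:ℝ)/3))) (2*M)
    have hlow : ∑ m ∈ Finset.range M, 8 * (1 / ((m : ℝ) + 27)) ≤ S := by
      rw [hSsum]
      have himg : ∑ m ∈ Finset.range M, 8 * (1 / ((m : ℝ) + 27))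
          = ∑ i ∈ (Finset.range M).image (fun m => 2 * m),
              |cN (i + 2) - cN (i + 1)| ^ (1/((1:ℝ)/3)) := by
        rw [Finset.sum_image (fun a _ b _ h => by omega)]
        apply Finset.sum_congr rfl
        intro m _
        have hc2 : cN (2 * m + 2) = -bSeq (m + 1) := by
          rw [show 2*m+2 = (2*m+1)+1 from rfl, cN_succ, if_neg (by omega),
            show (2*m+1)/2 = m by omega]
        have hc1 : cN (2 * m + 1) = bSeq (m + 1) := by
          rw [cN_succ, if_pos (by omega), show (2*m)/2 = m by omega]
        rw [hc2, hc1]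
        have hb := bSeq_pos (m+1)
        rw [show -bSeq (m+1) - bSeq (m+1) = -(2 * bSeq (m+1)) by ring, abs_neg,
          abs_of_pos (by linarith)]
        rw [show 1/((1:ℝ)/3) = ((3:ℕ):ℝ) by norm_num, Real.rpow_natCast,
          two_bSeq_cube]
        push_cast
        ring_nf
      rw [himg]
      apply Finset.sum_le_sum_of_subset_of_nonneg
      · intro i hi
        simp only [Finset.mem_image, Finset.mem_range] at hi ⊢
        obtain ⟨m, hm, rfl⟩ := hi
        omega
      · intro i _ _
        exact Real.rpow_nonneg (abs_nonneg _) _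
    have hbound : ENNReal.ofReal S ≤ TVsOn uBlow (1/3) Set.univ := by
      refine le_iSup_of_le (2*M) (le_iSup_of_le y (le_iSup_of_le hymono
        (le_iSup_of_le (fun i => mem_univ _) ?_)))
      exact le_of_eq rfl
    have hStoReal : S ≤ (TVsOn uBlow (1/3) Set.univ).toReal :=
      (ENNReal.ofReal_le_iff_le_toReal hTlt).mp hbound
    linarith
  have hdiv : Filter.Tendsto (fun M => ∑ m ∈ Finset.range M, 8 * (1 / ((m : ℝ) + 27)))
      Filter.atTop Filter.atTop := by
    rw [← not_summable_iff_tendsto_nat_atTop_of_nonneg (fun m => by positivity)]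
    exact not_summable_harm
  obtain ⟨M, hM⟩ := (hdiv.eventually_ge_atTop ((TVsOn uBlow (1/3) Set.univ).toReal + 1)).exists
  linarith [key M]

/-- The blow-up initial datum `u₀` satisfies: `x_n = x_{n-1} + 2B_n`;
(i) `‖u₀‖_∞ ≤ 1/3`; (ii) `u₀ ∈ BV^s` for every `0 < s < 1/3`;
(iii) `u₀ ∉ BV^{1/3}`; (iv) `Σ (2b_n)³ = 8 Σ 1/(n+26) = +∞`. -/
theorem uBlow_properties :
    (∀ n : ℕ, 1 ≤ n → xSeq n = xSeq (n - 1) + 2 * BSeq n) ∧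
    (∀ x : ℝ, |uBlow x| ≤ 1 / 3) ∧
    (∀ s : ℝ, 0 < s → s < 1 / 3 → TVsOn uBlow s Set.univ < ⊤) ∧
    TVsOn uBlow (1 / 3) Set.univ = ⊤ ∧
    (∀ n : ℕ, 1 ≤ n → (2 * bSeq n) ^ 3 = 8 * (1 / ((n : ℝ) + 26))) ∧
    ¬ Summable (fun m : ℕ => (2 * bSeq (m + 1)) ^ 3) := by
  refine ⟨?_, abs_uBlow_le, TVsOn_lt_top, TVsOn_third_eq_top,
    fun n _ => two_bSeq_cube n, not_summable_cube⟩
  intro n hn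
  obtain ⟨m, rfl⟩ : ∃ m, n = m + 1 := ⟨n - 1, by omega⟩
  simpa using (xSeq_add_two_BSeq m).symm
end
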